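/- arXiv:1508.02872 — 7 statements merged into one kernel-verified Lean document; each statement's English description precedes it below -/
import Mathlib

section
/- Let G be a (possibly infinite) graph, H an abelian Hausdorff topological group, and A a compact subset of H. Then G admits an A-flow (a map f from oriented edges to A with f(e⁻) = −f(e) that sums to zero over every finite oriented cut) if and only if for every finite set M of finite cuts of G there exists a map f from oriented edges to A summing to zero over every cut in M. -/
/-- The oriented edges of `G` crossing from `X` to its complement. -/
def orientedCut {V : Type*} (G : SimpleGraph V) (X : Set V) : Set (V × V) :=
  {p | G.Adj p.1 p.2 ∧ p.1 ∈ X ∧ p.2 ∉ X}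

/-!
Tychonoff: the antisymmetric maps with values in `A` on oriented edges and `0` elsewhere form a
compact subset of `V → V → H`, and each finite cut imposes a closed condition on them. The
hypothesis is the finite intersection property of these conditions, so all of them hold at once.
-/

open Set

namespace SimpleGraph

open scoped Classical

variable {V H : Type*} [AddCommGroup H] (G : SimpleGraph V)

noncomputable def restrictToAdj (f : V → V → H) : V → V → H :=
  fun x y => if G.Adj x y then f x y else 0

def antisymmEdgeMaps (A : Set H) : Set (V → V → H) :=
  (pi univ fun x => pi univ fun y => if G.Adj x y then A else {0}) ∩
    {f | ∀ x y, f y x = -f x y}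

lemma isCompact_antisymmEdgeMaps [TopologicalSpace H] [ContinuousNeg H] [T2Space H]
    {A : Set H} (hA : IsCompact A) : IsCompact (G.antisymmEdgeMaps A) := by
  have hbox : IsCompact (pi univ fun x => pi univ fun y => if G.Adj x y then A else {0}) :=
    isCompact_univ_pi fun x => isCompact_univ_pi fun y => by
      split_ifs
      exacts [hA, isCompact_singleton]
  refine hbox.inter_right ?_
  simp only [ofPred_forall]
  exact isClosed_iInter fun x => isClosed_iInter fun y =>
    isClosed_eq (by fun_prop) (by fun_prop)

lemma restrictToAdj_mem_antisymmEdgeMaps {A : Set H} {f : V → V → H}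
    (hA : ∀ x y, G.Adj x y → f x y ∈ A) (hanti : ∀ x y, f y x = -f x y) :
    G.restrictToAdj f ∈ G.antisymmEdgeMaps A := by
  refine ⟨fun x _ y _ => ?_, fun x y => ?_⟩
  · by_cases h : G.Adj x y <;> simp [restrictToAdj, h, hA x y]
  · by_cases h : G.Adj x y
    · simp [restrictToAdj, h, h.symm, hanti x y]
    · simp [restrictToAdj, h, mt G.adj_symm h]

lemma finsum_mem_orientedCut_restrictToAdj (f : V → V → H) (X : Set V) :
    ∑ᶠ p ∈ orientedCut G X, G.restrictToAdj f p.1 p.2 = ∑ᶠ p ∈ orientedCut G X, f p.1 p.2 :=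
  finsum_mem_congr rfl fun _ hp => if_pos hp.1

end SimpleGraph

lemma isClosed_setOf_finsum_mem_eq_zero {V M : Type*} [AddCommMonoid M] [TopologicalSpace M]
    [ContinuousAdd M] [T1Space M] {s : Set (V × V)} (hs : s.Finite) :
    IsClosed {f : V → V → M | ∑ᶠ p ∈ s, f p.1 p.2 = 0} := by
  simp only [finsum_mem_eq_finite_toFinset_sum _ hs]
  exact isClosed_singleton.preimage (continuous_finsetSum _ fun p _ => by fun_prop)

/-- Compactness theorem for `A`-flows: a graph `G` has an `A`-flow (values in the
compact set `A`, antisymmetric, summing to zero over every finite oriented cut) iff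
for every finite set `M` of finite cuts there is such a map summing to zero over
every cut in `M`. -/
theorem stmt0 {V H : Type*} [AddCommGroup H] [TopologicalSpace H]
    [IsTopologicalAddGroup H] [T2Space H]
    (G : SimpleGraph V) (A : Set H) (hA : IsCompact A) :
    (∃ f : V → V → H,
        (∀ x y, G.Adj x y → f x y ∈ A) ∧
        (∀ x y : V, f y x = - f x y) ∧
        (∀ X : Set V, (orientedCut G X).Finite →
          ∑ᶠ p ∈ orientedCut G X, f p.1 p.2 = 0)) ↔
      ∀ M : Finset (Set V), (∀ X ∈ M, (orientedCut G X).Finite) →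
        ∃ f : V → V → H,
          (∀ x y, G.Adj x y → f x y ∈ A) ∧
          (∀ x y : V, f y x = - f x y) ∧
          (∀ X ∈ M, ∑ᶠ p ∈ orientedCut G X, f p.1 p.2 = 0) := by
  refine ⟨fun ⟨f, hfA, hanti, hcut⟩ M hM => ⟨f, hfA, hanti, fun X hX => hcut X (hM X hX)⟩,
    fun hfin => ?_⟩
  let cutCondition (X : {X : Set V // (orientedCut G X).Finite}) : Set (V → V → H) :=
    {f | ∑ᶠ p ∈ orientedCut G X, f p.1 p.2 = 0}
  have hFIP (u : Finset {X : Set V // (orientedCut G X).Finite}) :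
      (G.antisymmEdgeMaps A ∩ ⋂ X ∈ u, cutCondition X).Nonempty := by
    classical
    obtain ⟨f, hfA, hanti, hcut⟩ := hfin (u.image Subtype.val) (by simp +contextual)
    refine ⟨G.restrictToAdj f, G.restrictToAdj_mem_antisymmEdgeMaps hfA hanti, ?_⟩
    simp only [mem_iInter]
    intro X hX
    simpa [cutCondition, G.finsum_mem_orientedCut_restrictToAdj] using
      hcut X (Finset.mem_image_of_mem _ hX)
  obtain ⟨f, ⟨hbox, hanti⟩, hcut⟩ := (G.isCompact_antisymmEdgeMaps hA).inter_iInter_nonempty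
    cutCondition (fun X => isClosed_setOf_finsum_mem_eq_zero X.2) hFIP
  refine ⟨f, fun x y hxy => ?_, hanti, fun X hX => mem_iInter.mp hcut ⟨X, hX⟩⟩
  simpa [hxy] using hbox x (mem_univ x) y (mem_univ y)
end

section
/- A (possibly infinite) graph admits a k-flow if and only if it admits a non-elusive ℤ_k-flow. -/
/-- A `k`-flow: an antisymmetric integer-valued map on oriented edges with values in
`{-(k-1),…,-1,1,…,k-1}` summing to zero over every finite oriented cut. -/
def IsKFlow {V : Type*} (G : SimpleGraph V) (k : ℕ) (f : V → V → ℤ) : Prop :=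
  (∀ x y, G.Adj x y → f x y ≠ 0 ∧ |f x y| < (k : ℤ)) ∧
  (∀ x y : V, f y x = - f x y) ∧
  ∀ X : Set V, (orientedCut G X).Finite → ∑ᶠ p ∈ orientedCut G X, f p.1 p.2 = 0

/-- A non-elusive `ℤ_k`-flow. -/
def IsNonElusiveZModFlow {V : Type*} (G : SimpleGraph V) (k : ℕ)
    (g : V → V → ZMod k) : Prop :=
  (∀ x y, G.Adj x y → g x y ≠ 0) ∧
  (∀ x y : V, g y x = - g x y) ∧
  ∀ X : Set V, (orientedCut G X).Finite → ∑ᶠ p ∈ orientedCut G X, g p.1 p.2 = 0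

-- A length-bounded `Relation.ReflTransGen`: the augmenting-path argument inducts on the bound
-- while the relation itself changes.
inductive ReachWithin {B : Type*} (r : B → B → Prop) : ℕ → B → B → Prop
  | refl (n : ℕ) (x : B) : ReachWithin r n x x
  | head {n : ℕ} {x y z : B} : r x y → ReachWithin r n y z → ReachWithin r (n + 1) x z

namespace ReachWithin

variable {B : Type*} {r : B → B → Prop} {n : ℕ} {x y : B}

theorem succ (h : ReachWithin r n x y) : ReachWithin r (n + 1) x y := by
  induction h with
  | refl n x => exact refl _ x
  | head hxy _ ih => exact head hxy ih

theorem of_reflTransGen (h : Relation.ReflTransGen r x y) : ∃ n, ReachWithin r n x y := by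
  induction h using Relation.ReflTransGen.head_induction_on with
  | refl => exact ⟨0, refl 0 y⟩
  | head hxz _ ih =>
    obtain ⟨n, hn⟩ := ih
    exact ⟨n + 1, head hxz hn⟩

end ReachWithin

theorem sum_eq_zero_of_swap_mem {V M : Type*} [AddCommGroup M] {s : Finset (V × V)}
    (hs : ∀ p ∈ s, p.swap ∈ s) (hloop : ∀ p ∈ s, p.1 ≠ p.2) {φ : V × V → M}
    (hφ : ∀ p, φ p.swap = -φ p) : ∑ p ∈ s, φ p = 0 :=
  Finset.sum_involution (fun p _ => p.swap) (fun p _ => by rw [hφ, add_neg_cancel])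
    (fun p hp _ h => hloop p hp (congrArg Prod.snd h)) hs (fun p _ => Prod.swap_swap p)

section Balancing

/- `E` and `c` encode a multigraph on `B` whose darts are the `p ∈ E`, running from `c p.1` to
`c p.2`; `excess c E φ b` is the net outflow of `φ` at `b`, and `shiftDart k φ p` pushes `k` units
back along `p` without changing any residue modulo `k`. -/
variable {V B : Type*} (c : V → B) (E : Finset (V × V)) (k : ℕ)

def PosStep (φ : V × V → ℤ) (x y : B) : Prop := ∃ p ∈ E, c p.1 = x ∧ c p.2 = y ∧ 0 < φ p

def shiftDart [DecidableEq V] (φ : V × V → ℤ) (p : V × V) : V × V → ℤ :=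
  φ - Pi.single p (k : ℤ) + Pi.single p.swap (k : ℤ)

def excess [DecidableEq B] {M : Type*} [AddCommMonoid M] (φ : V × V → M) (b : B) : M :=
  ∑ p ∈ E with c p.1 = b, φ p

def imbalance [DecidableEq B] [Fintype B] (φ : V × V → ℤ) : ℤ := ∑ b, |excess c E φ b|

structure IsAdmissible [DecidableEq B] (φ : V × V → ℤ) : Prop where
  antisymm : ∀ p, φ p.swap = -φ p
  abs_lt : ∀ p, |φ p| < k
  ne_zero : ∀ p ∈ E, φ p ≠ 0
  dvd_excess : ∀ b, (k : ℤ) ∣ excess c E φ b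

variable {c E k}

section Shift

variable [DecidableEq V] {φ : V × V → ℤ} {p : V × V}

theorem shiftDart_apply (q : V × V) :
    shiftDart k φ p q =
      φ q - (if q = p then (k : ℤ) else 0) + (if q = p.swap then (k : ℤ) else 0) := by
  simp [shiftDart, Pi.single_apply]

theorem shiftDart_apply_of_notMem (hp : p ∈ E) (hsym : ∀ p ∈ E, p.swap ∈ E) {q : V × V}
    (hq : q ∉ E) : shiftDart k φ p q = φ q := by
  have hqp : q ≠ p := fun h => hq (h ▸ hp)
  have hqs : q ≠ p.swap := fun h => hq (h ▸ hsym p hp)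
  simp [shiftDart_apply, hqp, hqs]

theorem PosStep.of_shiftDart (hpos : 0 < φ p) (hφ : ∀ q, φ q.swap = -φ q) {x y : B}
    (h : PosStep c E φ x y) : PosStep c E (shiftDart k φ p) x y ∨ y = c p.2 := by
  obtain ⟨q, hq, rfl, rfl, hq₀⟩ := h
  by_cases hqp : q = p
  · exact Or.inr (hqp ▸ rfl)
  have hqs : q ≠ p.swap := by
    rintro rfl
    linarith [hφ p]
  exact Or.inl ⟨q, hq, rfl, rfl, by simpa [shiftDart_apply, hqp, hqs] using hq₀⟩

theorem ReachWithin.of_shiftDart (hpos : 0 < φ p) (hφ : ∀ q, φ q.swap = -φ q) {n : ℕ} {x y : B}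
    (h : ReachWithin (PosStep c E φ) n x y) :
    ReachWithin (PosStep c E (shiftDart k φ p)) n x y ∨
      ReachWithin (PosStep c E (shiftDart k φ p)) n (c p.2) y := by
  induction h with
  | refl n x => exact Or.inl (.refl n x)
  | head hxz _ ih =>
    rcases ih with ih | ih
    · rcases hxz.of_shiftDart hpos hφ with hxz | rfl
      · exact Or.inl (.head hxz ih)
      · exact Or.inr ih.succ
    · exact Or.inr ih.succ

end Shift

variable [DecidableEq B]

theorem sum_excess_eq_sum_cut {M : Type*} [AddCommGroup M] (hsym : ∀ p ∈ E, p.swap ∈ E)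
    (hcross : ∀ p ∈ E, c p.1 ≠ c p.2) {φ : V × V → M} (hφ : ∀ p, φ p.swap = -φ p)
    (S : Finset B) :
    ∑ b ∈ S, excess c E φ b = ∑ p ∈ E with c p.1 ∈ S ∧ c p.2 ∉ S, φ p := by
  have hfiber : ∑ b ∈ S, excess c E φ b = ∑ p ∈ E with c p.1 ∈ S, φ p := by
    rw [← Finset.sum_fiberwise_of_maps_to (s := {p ∈ E | c p.1 ∈ S}) (g := fun p => c p.1)
      (fun p hp => (Finset.mem_filter.1 hp).2)]
    refine Finset.sum_congr rfl fun b hb => ?_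
    rw [excess, Finset.filter_filter]
    exact Finset.sum_congr (Finset.filter_congr fun p _ => by grind) fun _ _ => rfl
  have hinner : ∑ p ∈ E with c p.1 ∈ S ∧ c p.2 ∈ S, φ p = 0 :=
    sum_eq_zero_of_swap_mem (fun p hp => by simp only [Finset.mem_filter] at hp ⊢; grind)
      (fun p hp h => hcross p (Finset.mem_filter.1 hp).1 (congrArg c h)) hφ
  rw [hfiber, ← Finset.sum_filter_add_sum_filter_not _ (fun p => c p.2 ∈ S), Finset.filter_filter,
    Finset.filter_filter, hinner, zero_add]

section Shift

variable [DecidableEq V] {φ : V × V → ℤ} {p : V × V}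

theorem excess_shiftDart (hp : p ∈ E) (hsym : ∀ p ∈ E, p.swap ∈ E) (b : B) :
    excess c E (shiftDart k φ p) b =
      excess c E φ b - (if c p.1 = b then (k : ℤ) else 0) + (if c p.2 = b then (k : ℤ) else 0) := by
  simp only [excess, shiftDart, Finset.sum_add_distrib, Finset.sum_sub_distrib, Pi.add_apply,
    Pi.sub_apply, Finset.sum_pi_single', Finset.mem_filter, hp, hsym p hp, true_and, Prod.fst_swap]

theorem IsAdmissible.shiftDart (hsym : ∀ p ∈ E, p.swap ∈ E) (hcross : ∀ p ∈ E, c p.1 ≠ c p.2)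
    (hφ : IsAdmissible c E k φ) (hp : p ∈ E) (hpos : 0 < φ p) :
    IsAdmissible c E k (shiftDart k φ p) := by
  have hswap : p.swap ≠ p := fun h => hcross p hp (congrArg c (congrArg Prod.fst h)).symm
  have hφp := _root_.abs_lt.1 (hφ.abs_lt p)
  have hφswap := hφ.antisymm p
  constructor
  · intro q
    simp only [shiftDart_apply, hφ.antisymm, Prod.swap_eq_iff_eq_swap]
    split_ifs <;> grind
  · intro q
    have hφq := _root_.abs_lt.1 (hφ.abs_lt q)
    rw [shiftDart_apply, _root_.abs_lt]
    split_ifs <;> grind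
  · intro q hq
    have hφq := hφ.ne_zero q hq
    rw [shiftDart_apply]
    split_ifs <;> grind
  · intro b
    rw [excess_shiftDart hp hsym]
    exact ((hφ.dvd_excess b).sub (by split_ifs <;> simp)).add (by split_ifs <;> simp)

variable [Fintype B]

theorem imbalance_shiftDart (hp : p ∈ E) (hsym : ∀ p ∈ E, p.swap ∈ E)
    (hcross : ∀ p ∈ E, c p.1 ≠ c p.2) :
    imbalance c E (shiftDart k φ p) = imbalance c E φ
      + (|excess c E φ (c p.1) - k| - |excess c E φ (c p.1)|)
      + (|excess c E φ (c p.2) + k| - |excess c E φ (c p.2)|) := by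
  have hne := hcross p hp
  have hdiff : imbalance c E (shiftDart k φ p) - imbalance c E φ =
      ∑ b, (|excess c E (shiftDart k φ p) b| - |excess c E φ b|) := by
    rw [imbalance, imbalance, Finset.sum_sub_distrib]
  rw [Finset.sum_eq_add_of_mem (c p.1) (c p.2) (Finset.mem_univ _) (Finset.mem_univ _) hne
    (fun b _ hb => by simp [excess_shiftDart hp hsym, Ne.symm hb.1, Ne.symm hb.2])] at hdiff
  simp only [excess_shiftDart hp hsym, if_pos, hne, Ne.symm hne, if_false, add_zero,
    sub_zero] at hdiff
  linarith

end Shift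

variable [Fintype B] {φ : V × V → ℤ}

theorem exists_imbalance_lt_of_reachWithin (hsym : ∀ p ∈ E, p.swap ∈ E)
    (hcross : ∀ p ∈ E, c p.1 ≠ c p.2) {b : B} (n : ℕ) :
    ∀ {φ : V × V → ℤ} {a : B}, IsAdmissible c E k φ → 0 < excess c E φ a →
      excess c E φ b < 0 → ReachWithin (PosStep c E φ) n a b →
      ∃ ψ, IsAdmissible c E k ψ ∧ (∀ q ∉ E, ψ q = φ q) ∧ imbalance c E ψ < imbalance c E φ := by
  classical
  induction n with
  | zero =>
    rintro φ a - ha hb ⟨⟩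
    exact absurd ha hb.not_gt
  | succ n ih =>
    rintro φ a hφ ha hb (⟨⟩ | ⟨⟨p, hp, rfl, rfl, hpos⟩, hrest⟩)
    · exact absurd ha hb.not_gt
    have hk : (0 : ℤ) < k := hpos.trans (_root_.abs_lt.1 (hφ.abs_lt p)).2
    have ha' : (k : ℤ) ≤ excess c E φ (c p.1) := Int.le_of_dvd ha (hφ.dvd_excess _)
    have hshift := imbalance_shiftDart (k := k) (φ := φ) hp hsym hcross
    rw [abs_of_nonneg (by linarith), abs_of_pos ha] at hshift
    have hoff : ∀ q ∉ E, shiftDart k φ p q = φ q := fun q hq => shiftDart_apply_of_notMem hp hsym hq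
    rcases lt_trichotomy (excess c E φ (c p.2)) 0 with hz | hz | hz
    · have hz' : excess c E φ (c p.2) ≤ -k := by
        have := Int.le_of_dvd (neg_pos.2 hz) (hφ.dvd_excess _).neg_right
        linarith
      refine ⟨shiftDart k φ p, hφ.shiftDart hsym hcross hp hpos, hoff, ?_⟩
      rw [hshift, abs_of_nonpos (by linarith), abs_of_neg hz]
      linarith
    -- The shift moves `k` units of excess onto the next block without changing the imbalance,
    -- and the path from there is shorter.
    · have hb₁ : b ≠ c p.1 := by rintro rfl; exact absurd ha hb.not_gt
      have hb₂ : b ≠ c p.2 := by rintro rfl; exact hb.ne hz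
      obtain ⟨ψ, hψ, hψoff, hψlt⟩ := ih (a := c p.2) (hφ.shiftDart hsym hcross hp hpos)
        (by simpa [excess_shiftDart hp hsym, hz, hcross p hp] using hk)
        (by simpa [excess_shiftDart hp hsym, hb₁.symm, hb₂.symm] using hb)
        ((hrest.of_shiftDart hpos hφ.antisymm).elim id id)
      refine ⟨ψ, hψ, fun q hq => (hψoff q hq).trans (hoff q hq), ?_⟩
      rw [hshift, hz] at hψlt
      simpa [abs_of_pos hk] using hψlt
    · exact ih hφ hz hb hrest

theorem exists_reachWithin_excess_neg (hsym : ∀ p ∈ E, p.swap ∈ E)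
    (hcross : ∀ p ∈ E, c p.1 ≠ c p.2) (hφ : ∀ p, φ p.swap = -φ p) {a : B}
    (ha : 0 < excess c E φ a) : ∃ b n, excess c E φ b < 0 ∧ ReachWithin (PosStep c E φ) n a b := by
  classical
  let R : Finset B := {b | Relation.ReflTransGen (PosStep c E φ) a b}
  suffices ∃ b ∈ R, excess c E φ b < 0 by
    obtain ⟨b, hbR, hb⟩ := this
    obtain ⟨n, hn⟩ := ReachWithin.of_reflTransGen (Finset.mem_filter.1 hbR).2
    exact ⟨b, n, hb, hn⟩
  by_contra! hR
  have haR : a ∈ R := Finset.mem_filter.2 ⟨Finset.mem_univ a, .refl⟩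
  have hpos : 0 < ∑ b ∈ R, excess c E φ b := ha.trans_le (Finset.single_le_sum hR haR)
  have hcut : ∑ p ∈ E with c p.1 ∈ R ∧ c p.2 ∉ R, φ p ≤ 0 := by
    refine Finset.sum_nonpos fun p hp => ?_
    simp only [R, Finset.mem_filter, Finset.mem_univ, true_and] at hp
    by_contra! hp₀
    exact hp.2.2 (hp.2.1.tail ⟨p, hp.1, rfl, rfl, hp₀⟩)
  rw [sum_excess_eq_sum_cut hsym hcross hφ] at hpos
  exact hpos.not_ge hcut

theorem exists_imbalance_lt (hsym : ∀ p ∈ E, p.swap ∈ E) (hcross : ∀ p ∈ E, c p.1 ≠ c p.2)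
    (hφ : IsAdmissible c E k φ) (hne : ∃ b, excess c E φ b ≠ 0) :
    ∃ ψ, IsAdmissible c E k ψ ∧ (∀ q ∉ E, ψ q = φ q) ∧ imbalance c E ψ < imbalance c E φ := by
  obtain ⟨a, ha⟩ : ∃ a, 0 < excess c E φ a := by
    by_contra! h
    have hsum : ∑ b, excess c E φ b = 0 := by
      simpa using sum_excess_eq_sum_cut hsym hcross hφ.antisymm Finset.univ
    obtain ⟨b, hb⟩ := hne
    exact hb ((Finset.sum_eq_zero_iff_of_nonpos fun b _ => h b).1 hsum b (Finset.mem_univ b))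
  obtain ⟨b, n, hb, hab⟩ := exists_reachWithin_excess_neg hsym hcross hφ.antisymm ha
  exact exists_imbalance_lt_of_reachWithin hsym hcross n hφ ha hb hab

theorem exists_isAdmissible_excess_eq_zero (hsym : ∀ p ∈ E, p.swap ∈ E)
    (hcross : ∀ p ∈ E, c p.1 ≠ c p.2) (hφ : IsAdmissible c E k φ) :
    ∃ ψ, IsAdmissible c E k ψ ∧ (∀ q ∉ E, ψ q = φ q) ∧ ∀ b, excess c E ψ b = 0 := by
  induction hn : (imbalance c E φ).toNat using Nat.strong_induction_on generalizing φ with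
  | _ n ih =>
  by_cases hzero : ∀ b, excess c E φ b = 0
  · exact ⟨φ, hφ, fun _ _ => rfl, hzero⟩
  obtain ⟨ψ, hψ, hψoff, hψlt⟩ := exists_imbalance_lt hsym hcross hφ (not_forall.1 hzero)
  have hψn : (imbalance c E ψ).toNat < n := hn ▸ (Int.toNat_lt_toNat
    (hψlt.trans_le' (Finset.sum_nonneg fun b _ => abs_nonneg _))).2 hψlt
  obtain ⟨χ, hχ, hχoff, hχzero⟩ := ih _ hψn hψ rfl
  exact ⟨χ, hχ, fun q hq => (hχoff q hq).trans (hψoff q hq), hχzero⟩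

end Balancing

theorem exists_antisymm_int_lift {V : Type*} {k : ℕ} [NeZero k] {g : V × V → ZMod k}
    (hg : ∀ p, g p.swap = -g p) :
    ∃ f : V × V → ℤ, (∀ p, f p.swap = -f p) ∧ (∀ p, |f p| < k) ∧
      ∀ p, p.1 ≠ p.2 → (f p : ZMod k) = g p := by
  let : LinearOrder V := IsWellOrder.linearOrder WellOrderingRel
  have hval : ∀ p, ((g p).val : ℤ) < k := fun p => by exact_mod_cast (g p).val_lt
  refine ⟨fun p => if p.1 < p.2 then (g p).val else if p.2 < p.1 then -(g p.swap).val else 0,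
    fun p => ?_, fun p => ?_, fun p hp => ?_⟩
  · rcases lt_trichotomy p.1 p.2 with h | h | h
    · simp [h, h.not_gt]
    · simp [h]
    · simp [h, h.not_gt]
  · have hp₁ := hval p
    have hp₂ := hval p.swap
    dsimp only
    split_ifs <;> rw [abs_lt] <;> omega
  · rcases hp.lt_or_gt with h | h
    · simp [h]
    · simp [h, h.not_gt, hg]

section Graph

variable {V : Type*} (G : SimpleGraph V) (k : ℕ)

def boundedNowhereZero : Set (V × V → ℤ) :=
  {F | (∀ p, F p.swap = -F p) ∧ (∀ p, |F p| < k) ∧ ∀ p, G.Adj p.1 p.2 → F p ≠ 0}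

def cutBalanced (X : Set V) : Set (V × V → ℤ) := {F | ∑ᶠ p ∈ orientedCut G X, F p = 0}

variable {G k}

theorem isCompact_boundedNowhereZero : IsCompact (boundedNowhereZero G k) := by
  refine (isCompact_univ_pi fun _ => isCompact_Icc (a := -(k : ℤ)) (b := k)).of_isClosed_subset
    ?_ fun F hF p _ => ?_
  · have hset : boundedNowhereZero G k = ⋂ p, (fun F : V × V → ℤ => (F p, F p.swap)) ⁻¹'
        {z | z.2 = -z.1 ∧ |z.1| < k ∧ (G.Adj p.1 p.2 → z.1 ≠ 0)} := by
      ext F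
      simp [boundedNowhereZero, forall_and]
    rw [hset]
    exact isClosed_iInter fun p => IsClosed.preimage (by fun_prop) (isClosed_discrete _)
  · have := abs_lt.1 (hF.2.1 p)
    exact ⟨this.1.le, this.2.le⟩

theorem isClosed_cutBalanced {X : Set V} (hX : (orientedCut G X).Finite) :
    IsClosed (cutBalanced G X) := by
  simp only [cutBalanced, finsum_mem_eq_finite_toFinset_sum _ hX]
  exact isClosed_eq (continuous_finsetSum _ fun p _ => continuous_apply p) continuous_const

theorem finite_adj_separated_of_finite_orientedCut {ι : Type*} [Finite ι] {X : ι → Set V}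
    (hX : ∀ i, (orientedCut G (X i)).Finite) :
    {p : V × V | G.Adj p.1 p.2 ∧ {i | p.1 ∈ X i} ≠ {i | p.2 ∈ X i}}.Finite := by
  refine (Set.finite_iUnion fun i =>
    (hX i).union ((hX i).preimage Prod.swap_injective.injOn)).subset fun p ⟨hadj, hne⟩ => ?_
  obtain ⟨i, hi⟩ : ∃ i, ¬(p.1 ∈ X i ↔ p.2 ∈ X i) := by
    by_contra! h
    exact hne (Set.ext h)
  simp only [Set.mem_iUnion, Set.mem_union, Set.mem_preimage, orientedCut, Set.mem_ofPred_eq,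
    Prod.fst_swap, Prod.snd_swap]
  exact ⟨i, by tauto⟩

theorem orientedCut_preimage {B : Type*} [DecidableEq B] {β : V → B} {E : Finset (V × V)}
    (hE : ∀ p, p ∈ E ↔ G.Adj p.1 p.2 ∧ β p.1 ≠ β p.2) (S : Finset B) :
    orientedCut G (β ⁻¹' S) = ↑{p ∈ E | β p.1 ∈ S ∧ β p.2 ∉ S} := by
  ext p
  simp only [orientedCut, Set.mem_preimage, Finset.mem_coe, Set.mem_ofPred_eq,
    Finset.mem_filter, hE]
  constructor
  · rintro ⟨hadj, h1, h2⟩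
    exact ⟨⟨hadj, fun h => h2 (h ▸ h1)⟩, h1, h2⟩
  · rintro ⟨⟨hadj, -⟩, h1, h2⟩
    exact ⟨hadj, h1, h2⟩

theorem finsum_orientedCut_preimage {B : Type*} [DecidableEq B] {β : V → B}
    {E : Finset (V × V)} (hE : ∀ p, p ∈ E ↔ G.Adj p.1 p.2 ∧ β p.1 ≠ β p.2) {M : Type*}
    [AddCommGroup M] {φ : V × V → M} (hφ : ∀ p, φ p.swap = -φ p) (S : Finset B) :
    ∑ᶠ p ∈ orientedCut G (β ⁻¹' S), φ p = ∑ b ∈ S, excess β E φ b := by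
  rw [orientedCut_preimage hE, finsum_mem_coe_finset,
    sum_excess_eq_sum_cut (fun p hp => ?_) (fun p hp => ((hE p).1 hp).2) hφ]
  rw [hE] at hp ⊢
  exact ⟨hp.1.symm, hp.2.symm⟩

theorem exists_mem_boundedNowhereZero_cutBalanced [NeZero k] {g : V → V → ZMod k}
    (hg : IsNonElusiveZModFlow G k g) {ι : Type*} [Finite ι] {X : ι → Set V}
    (hX : ∀ i, (orientedCut G (X i)).Finite) :
    ∃ F ∈ boundedNowhereZero G k, ∀ i, F ∈ cutBalanced G (X i) := by
  classical
  have := Fintype.ofFinite ι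
  let β : V → Set ι := fun v => {i | v ∈ X i}
  let E := (finite_adj_separated_of_finite_orientedCut hX).toFinset
  have hE : ∀ p, p ∈ E ↔ G.Adj p.1 p.2 ∧ β p.1 ≠ β p.2 := fun p => Set.Finite.mem_toFinset _
  have hsym : ∀ p ∈ E, p.swap ∈ E := fun p hp => by
    rw [hE] at hp ⊢
    exact ⟨hp.1.symm, hp.2.symm⟩
  have hcross : ∀ p ∈ E, β p.1 ≠ β p.2 := fun p hp => ((hE p).1 hp).2
  have hganti : ∀ p : V × V, g p.swap.1 p.swap.2 = -g p.1 p.2 := fun p => hg.2.1 p.1 p.2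
  obtain ⟨f, hfanti, hflt, hfg⟩ := exists_antisymm_int_lift (g := fun p => g p.1 p.2) hganti
  have hfE : ∀ p ∈ E, (f p : ZMod k) = g p.1 p.2 := fun p hp => hfg p ((hE p).1 hp).1.ne
  have hf : IsAdmissible β E k f := by
    refine ⟨hfanti, hflt, fun p hp h0 => hg.1 p.1 p.2 ((hE p).1 hp).1 ?_, fun b => ?_⟩
    · rw [← hfE p hp, h0, Int.cast_zero]
    · have hblock := hg.2.2 _ ((orientedCut_preimage hE {b}).symm ▸ Finset.finite_toSet _)
      rw [finsum_orientedCut_preimage hE hganti, Finset.sum_singleton] at hblock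
      rw [← ZMod.intCast_zmod_eq_zero_iff_dvd, ← hblock, excess, excess, Int.cast_sum]
      exact Finset.sum_congr rfl fun p hp => hfE p (Finset.mem_filter.1 hp).1
  obtain ⟨ψ, hψ, hψoff, hψzero⟩ := exists_isAdmissible_excess_eq_zero hsym hcross hf
  refine ⟨ψ, ⟨hψ.antisymm, hψ.abs_lt, fun p hp => ?_⟩, fun i => ?_⟩
  · by_cases hpE : p ∈ E
    · exact hψ.ne_zero p hpE
    · rw [hψoff p hpE]
      exact fun h0 => hg.1 p.1 p.2 hp (by rw [← hfg p hp.ne, h0, Int.cast_zero])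
  · have hXi : X i = β ⁻¹' ↑({b | i ∈ b} : Finset (Set ι)) := by
      ext v
      simp [β]
    rw [cutBalanced, Set.mem_ofPred_eq, hXi, finsum_orientedCut_preimage hE hψ.antisymm]
    exact Finset.sum_eq_zero fun b _ => hψzero b

end Graph

theorem IsKFlow.isNonElusiveZModFlow {V : Type*} {G : SimpleGraph V} {k : ℕ} {f : V → V → ℤ}
    (hf : IsKFlow G k f) : IsNonElusiveZModFlow G k fun x y => (f x y : ZMod k) := by
  obtain ⟨hval, hanti, hcut⟩ := hf
  refine ⟨fun x y hxy h0 => (hval x y hxy).1 ?_, fun x y => by dsimp only; rw [hanti, Int.cast_neg],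
    fun X hX => ?_⟩
  · exact Int.eq_zero_of_abs_lt_dvd ((ZMod.intCast_zmod_eq_zero_iff_dvd _ k).1 h0) (hval x y hxy).2
  · have := congrArg (Int.castAddHom (ZMod k)) (hcut X hX)
    rwa [(Int.castAddHom (ZMod k)).map_finsum_mem _ hX, map_zero] at this

theorem exists_isKFlow_of_isNonElusiveZModFlow {V : Type*} {G : SimpleGraph V} {k : ℕ} [NeZero k]
    {g : V → V → ZMod k} (hg : IsNonElusiveZModFlow G k g) : ∃ f, IsKFlow G k f := by
  obtain ⟨F, hF, hcut⟩ := isCompact_boundedNowhereZero.inter_iInter_nonempty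
    (fun X : {X : Set V // (orientedCut G X).Finite} => cutBalanced G X.1)
    (fun X => isClosed_cutBalanced X.2) fun u => by
      obtain ⟨F, hF, hcut⟩ :=
        exists_mem_boundedNowhereZero_cutBalanced hg (X := fun X : u => X.1.1) fun X => X.1.2
      exact ⟨F, hF, Set.mem_iInter₂.2 fun X hX => hcut ⟨X, hX⟩⟩
  exact ⟨fun x y => F (x, y), fun x y hxy => ⟨hF.2.2 (x, y) hxy, hF.2.1 _⟩,
    fun x y => hF.1 (x, y), fun X hX => Set.mem_iInter.1 hcut ⟨X, hX⟩⟩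

/-- A (possibly infinite) graph has a `k`-flow iff it has a non-elusive `ℤ_k`-flow. -/
theorem stmt2 {V : Type*} (G : SimpleGraph V) (k : ℕ) (hk : 1 ≤ k) :
    (∃ f : V → V → ℤ, IsKFlow G k f) ↔
      (∃ g : V → V → ZMod k, IsNonElusiveZModFlow G k g) := by
  have : NeZero k := ⟨by omega⟩
  exact ⟨fun ⟨_, hf⟩ => ⟨_, hf.isNonElusiveZModFlow⟩,
    fun ⟨_, hg⟩ => exists_isKFlow_of_isNonElusiveZModFlow hg⟩
end

section
/- A locally finite graph G has a non-elusive ℤ₄-flow if and only if its edge set is the union of two elements of its topological cycle space. -/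
/-- The (unoriented) edges of `G` crossing between `X` and its complement. -/
def edgeCut {V : Type*} (G : SimpleGraph V) (X : Set V) : Set (Sym2 V) :=
  {e | ∃ x y, G.Adj x y ∧ x ∈ X ∧ y ∉ X ∧ e = s(x, y)}

/-- Membership in the topological cycle space of a locally finite graph:
an edge set meeting every finite cut in an even number of edges. -/
def InCycleSpace {V : Type*} (G : SimpleGraph V) (D : Set (Sym2 V)) : Prop :=
  D ⊆ G.edgeSet ∧
  ∀ X : Set V, (edgeCut G X).Finite → Even ((D ∩ edgeCut G X).ncard)

theorem LinearMap.exists_comp_eq_of_ker_le {K A W U : Type*} [Field K] [AddCommGroup A]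
    [Module K A] [AddCommGroup W] [Module K W] [AddCommGroup U] [Module K U]
    (π : A →ₗ[K] W) (ρ : A →ₗ[K] U) (h : LinearMap.ker π ≤ LinearMap.ker ρ) :
    ∃ φ : W →ₗ[K] U, φ ∘ₗ π = ρ := by
  obtain ⟨ℓ, hℓ⟩ := ((LinearMap.ker π).liftQ π le_rfl).exists_leftInverse_of_injective
    (Submodule.ker_liftQ_eq_bot _ _ _ le_rfl)
  refine ⟨(LinearMap.ker π).liftQ ρ h ∘ₗ ℓ, LinearMap.ext fun a => ?_⟩
  have hℓa : ℓ (π a) = Submodule.Quotient.mk a :=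
    LinearMap.congr_fun hℓ (Submodule.Quotient.mk a)
  simp [hℓa]

theorem Finsupp.exists_sum_mul_eq_of_consistent {K ι E : Type*} [Field K] (r : ι → E →₀ K)
    (b : ι → K)
    (h : ∀ c : ι →₀ K, linearCombination K r c = 0 → linearCombination K b c = 0) :
    ∃ x : E → K, ∀ i, (r i).sum (fun e a => a * x e) = b i := by
  obtain ⟨φ, hφ⟩ := LinearMap.exists_comp_eq_of_ker_le _ _ h
  refine ⟨fun e => φ (single e 1), fun i => ?_⟩
  have hφi : φ (r i) = b i := by simpa using LinearMap.congr_fun hφ (single i 1)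
  conv_rhs => rw [← hφi, ← (r i).sum_single, map_finsuppSum]
  simp only [← smul_eq_mul, ← map_smul, smul_single_one]

section Cuts

variable {V : Type*} {G : SimpleGraph V} {X Z : Set V}

lemma edgeCut_subset_edgeSet : edgeCut G X ⊆ G.edgeSet := by
  rintro e ⟨x, y, hxy, -, -, rfl⟩
  exact hxy

lemma mk_mem_edgeCut_iff {u v : V} (h : G.Adj u v) :
    s(u, v) ∈ edgeCut G X ↔ ¬(u ∈ X ↔ v ∈ X) := by
  constructor
  · rintro ⟨x, y, -, hx, hy, he⟩
    rcases Sym2.eq_iff.1 he with ⟨rfl, rfl⟩ | ⟨rfl, rfl⟩ <;> tauto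
  · intro huv
    by_cases hu : u ∈ X
    · exact ⟨u, v, h, hu, by tauto, rfl⟩
    · exact ⟨v, u, h.symm, by tauto, hu, Sym2.eq_swap⟩

lemma edgeCut_symmDiff : edgeCut G (symmDiff X Z) = symmDiff (edgeCut G X) (edgeCut G Z) := by
  ext e
  by_cases he : e ∈ G.edgeSet
  · induction e using Sym2.ind with
    | _ u v =>
      simp only [Set.mem_symmDiff, mk_mem_edgeCut_iff (G.mem_edgeSet.1 he)]
      tauto
  · have hcut : ∀ Y : Set V, e ∉ edgeCut G Y := fun Y h => he (edgeCut_subset_edgeSet h)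
    simp [Set.mem_symmDiff, hcut]

lemma edgeCut_inter_subset : edgeCut G (X ∩ Z) ⊆ edgeCut G X ∪ edgeCut G Z := by
  rintro e he
  obtain ⟨u, v, h, -, -, rfl⟩ := id he
  rw [mk_mem_edgeCut_iff h, Set.mem_inter_iff, Set.mem_inter_iff] at he
  rw [Set.mem_union, mk_mem_edgeCut_iff h, mk_mem_edgeCut_iff h]
  tauto

lemma injOn_mk_orientedCut (X : Set V) :
    Set.InjOn (fun p : V × V => s(p.1, p.2)) (orientedCut G X) := by
  rintro ⟨a, b⟩ ⟨-, ha, hb⟩ ⟨c, d⟩ ⟨-, hc, hd⟩ h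
  rcases Sym2.eq_iff.1 h with ⟨rfl, rfl⟩ | ⟨rfl, rfl⟩
  · rfl
  · exact absurd ha hd

lemma image_mk_orientedCut (X : Set V) :
    (fun p : V × V => s(p.1, p.2)) '' orientedCut G X = edgeCut G X := by
  ext e
  constructor
  · rintro ⟨p, ⟨h, h1, h2⟩, rfl⟩
    exact ⟨p.1, p.2, h, h1, h2, rfl⟩
  · rintro ⟨x, y, h, hx, hy, rfl⟩
    exact ⟨(x, y), ⟨h, hx, hy⟩, rfl⟩

lemma orientedCut_finite_iff : (orientedCut G X).Finite ↔ (edgeCut G X).Finite := by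
  rw [← image_mk_orientedCut, Set.finite_image_iff (injOn_mk_orientedCut X)]

lemma finsum_orientedCut_mk {M : Type*} [AddCommMonoid M] (φ : Sym2 V → M) :
    ∑ᶠ p ∈ orientedCut G X, φ s(p.1, p.2) = ∑ᶠ e ∈ edgeCut G X, φ e := by
  rw [← image_mk_orientedCut, finsum_mem_image (injOn_mk_orientedCut X)]

lemma finsum_orientedCut_indicator {M : Type*} [AddCommMonoid M] (S : Set (Sym2 V))
    (φ : Sym2 V → M) :
    ∑ᶠ p ∈ orientedCut G X, S.indicator φ s(p.1, p.2) =
      ∑ᶠ e ∈ S ∩ edgeCut G X, φ e := by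
  rw [finsum_orientedCut_mk, finsum_mem_def, Set.indicator_indicator, Set.inter_comm,
    ← finsum_mem_def]

end Cuts

section Flows

variable {V : Type*} {G : SimpleGraph V} {X Z : Set V}

def IsFlow {M : Type*} [AddCommGroup M] (G : SimpleGraph V) (f : V → V → M) : Prop :=
  (∀ x y, f y x = -f x y) ∧
    ∀ X : Set V, (orientedCut G X).Finite → ∑ᶠ p ∈ orientedCut G X, f p.1 p.2 = 0

variable {M : Type*} [AddCommGroup M] {f g : V → V → M}

lemma IsFlow.add (hf : IsFlow G f) (hg : IsFlow G g) : IsFlow G (f + g) := by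
  refine ⟨fun x y => by simp [hf.1 x y, hg.1 x y, add_comm], fun X hX => ?_⟩
  simp only [Pi.add_apply]
  rw [finsum_mem_add_distrib hX, hf.2 X hX, hg.2 X hX, add_zero]

lemma IsFlow.sub (hf : IsFlow G f) (hg : IsFlow G g) : IsFlow G (f - g) := by
  refine ⟨fun x y => by simp only [Pi.sub_apply, hf.1 x y, hg.1 x y]; abel, fun X hX => ?_⟩
  simp only [Pi.sub_apply]
  rw [finsum_mem_sub_distrib (fun p => f p.1 p.2) (fun p => g p.1 p.2) hX, hf.2 X hX,
    hg.2 X hX, sub_zero]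

theorem finsum_orientedCut_add_symmDiff {R : Type*} [CommRing R] {c : V → V → R}
    (hc : ∀ x y, c y x = -c x y) (hX : (edgeCut G X).Finite) (hZ : (edgeCut G Z).Finite) :
    ∑ᶠ p ∈ orientedCut G X, c p.1 p.2 + ∑ᶠ p ∈ orientedCut G Z, c p.1 p.2 =
      ∑ᶠ p ∈ orientedCut G (symmDiff X Z), c p.1 p.2 +
        2 * ∑ᶠ p ∈ orientedCut G (X ∩ Z), c p.1 p.2 := by
  set T := edgeCut G X ∪ edgeCut G Z
  -- The sum across `Y` pairs `c` with the coboundary of the potential `1_Y`, which is additive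
  -- in the potential, and `1_X + 1_Z = 1_{X ∆ Z} + 2 • 1_{X ∩ Z}`.
  let τ (Y : Set V) : Sym2 V → R := Sym2.lift
    ⟨fun u v => c u v * (Y.indicator 1 u - Y.indicator 1 v),
      fun u v => by dsimp only; rw [hc]; ring⟩
  have hτ : ∀ Y, edgeCut G Y ⊆ T →
      ∑ᶠ p ∈ orientedCut G Y, c p.1 p.2 = ∑ᶠ e ∈ T, τ Y e := by
    intro Y hYT
    have hcut : ∀ p ∈ orientedCut G Y, c p.1 p.2 = τ Y s(p.1, p.2) := by
      rintro p ⟨-, h1, h2⟩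
      simp [τ, h1, h2]
    rw [finsum_mem_congr rfl hcut, finsum_orientedCut_mk]
    refine finsum_mem_inter_support_eq' _ _ _ fun e he => ⟨fun h => hYT h, fun heT => ?_⟩
    induction e using Sym2.ind with
    | _ u v =>
      have huv : G.Adj u v := heT.elim (edgeCut_subset_edgeSet ·) (edgeCut_subset_edgeSet ·)
      rw [mk_mem_edgeCut_iff huv]
      intro hiff
      apply he
      simp only [τ, Sym2.lift_mk]
      by_cases hu : u ∈ Y
      · simp [hu, hiff.1 hu]
      · simp [hu, mt hiff.2 hu]
  have hT : T.Finite := hX.union hZ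
  rw [hτ X Set.subset_union_left, hτ Z Set.subset_union_right,
    hτ _ (edgeCut_symmDiff ▸ Set.symmDiff_subset_union), hτ _ edgeCut_inter_subset,
    ← finsum_mem_add_distrib hT, mul_finsum_mem' _ _ hT, ← finsum_mem_add_distrib hT]
  have hind : ∀ w, (X.indicator 1 w : R) + Z.indicator 1 w =
      (symmDiff X Z).indicator 1 w + 2 * (X ∩ Z).indicator 1 w := by
    intro w
    by_cases hwX : w ∈ X <;> by_cases hwZ : w ∈ Z <;>
      simp [Set.mem_symmDiff, hwX, hwZ, one_add_one_eq_two]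
  refine finsum_mem_congr rfl fun e _ => ?_
  induction e using Sym2.ind with
  | _ u v =>
    simp only [τ, Sym2.lift_mk]
    linear_combination c u v * (hind u - hind v)

end Flows

namespace ZMod4

def toZMod2 : ZMod 4 →+* ZMod 2 := ZMod.castHom (by norm_num) (ZMod 2)

def twice : ZMod 2 →+ ZMod 4 where
  toFun a := 2 * a.val
  map_zero' := rfl
  map_add' := by decide

def half (a : ZMod 4) : ZMod 2 := (a.val / 2 : ℕ)

lemma toZMod2_eq_zero_or_eq_one : ∀ a : ZMod 4, toZMod2 a = 0 ∨ toZMod2 a = 1 := by decide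

lemma toZMod2_twice : ∀ a : ZMod 2, toZMod2 (twice a) = 0 := by decide

lemma neg_twice : ∀ a : ZMod 2, -twice a = twice a := by decide

lemma twice_half : ∀ a : ZMod 4, toZMod2 a = 0 → twice (half a) = a := by decide

lemma half_add :
    ∀ a b : ZMod 4, toZMod2 a = 0 → toZMod2 b = 0 → half (a + b) = half a + half b := by
  decide

lemma two_mul_eq_zero : ∀ a : ZMod 4, toZMod2 a = 0 → 2 * a = 0 := by decide

lemma eq_two : ∀ a : ZMod 4, toZMod2 a = 0 → a ≠ 0 → a = 2 := by decide

lemma natCast_mul_two_eq_zero_iff {n : ℕ} : (n : ZMod 4) * 2 = 0 ↔ Even n := by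
  have : ((n * 2 : ℕ) : ZMod 4) = (n : ZMod 4) * 2 := by push_cast; rfl
  rw [← this, ZMod.natCast_eq_zero_iff, even_iff_two_dvd]
  omega

end ZMod4

open ZMod4

section CycleSpace

variable {V : Type*} {G : SimpleGraph V} {X : Set V}

lemma toZMod2_finsum_orientedCut {f : V → V → ZMod 4} {S : Set (Sym2 V)}
    (hX : (edgeCut G X).Finite)
    (hf : ∀ p ∈ orientedCut G X, toZMod2 (f p.1 p.2) = S.indicator 1 s(p.1, p.2)) :
    toZMod2 (∑ᶠ p ∈ orientedCut G X, f p.1 p.2) = (S ∩ edgeCut G X).ncard := by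
  have hmap := (toZMod2 : ZMod 4 →+ ZMod 2).map_finsum_mem (fun p : V × V => f p.1 p.2)
    (orientedCut_finite_iff.2 hX)
  simp only [AddMonoidHom.coe_coe] at hmap
  rw [hmap, finsum_mem_congr rfl hf, finsum_orientedCut_indicator, ← finsum_one,
    Nat.cast_finsum_mem (hX.subset Set.inter_subset_right)]
  simp

lemma finsum_orientedCut_two_eq_zero_iff (S : Set (Sym2 V)) (hX : (edgeCut G X).Finite) :
    ∑ᶠ p ∈ orientedCut G X, S.indicator (fun _ => (2 : ZMod 4)) s(p.1, p.2) = 0 ↔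
      Even (S ∩ edgeCut G X).ncard := by
  rw [finsum_orientedCut_indicator, ← natCast_mul_two_eq_zero_iff, ← finsum_one,
    Nat.cast_finsum_mem (hX.subset Set.inter_subset_right),
    finsum_mem_mul' _ _ (hX.subset Set.inter_subset_right)]
  simp

lemma InCycleSpace.isFlow {D : Set (Sym2 V)} (hD : InCycleSpace G D) :
    IsFlow G fun x y => D.indicator (fun _ => (2 : ZMod 4)) s(x, y) :=
  ⟨fun x y => by dsimp only; rw [Sym2.eq_swap]; by_cases h : s(x, y) ∈ D <;> simp [h]; decide,
    fun X hX => (finsum_orientedCut_two_eq_zero_iff D (orientedCut_finite_iff.1 hX)).2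
      (hD.2 X (orientedCut_finite_iff.1 hX))⟩

abbrev FiniteCutSet (G : SimpleGraph V) := {X : Set V // (edgeCut G X).Finite}

def FiniteCutSet.symmDiff (X Y : FiniteCutSet G) : FiniteCutSet G :=
  ⟨_root_.symmDiff X.1 Y.1, by
    rw [edgeCut_symmDiff]
    exact (X.2.union Y.2).subset Set.symmDiff_subset_union⟩

lemma FiniteCutSet.finite_inter (C : Set (Sym2 V)) (X : FiniteCutSet G) :
    (C ∩ edgeCut G X.1).Finite :=
  X.2.subset Set.inter_subset_right

noncomputable def cutRow (C : Set (Sym2 V)) (X : FiniteCutSet G) : Sym2 V →₀ ZMod 2 :=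
  Finsupp.ofSupportFinite ((C ∩ edgeCut G X.1).indicator 1)
    ((X.finite_inter C).subset Set.support_indicator_subset)

lemma coe_cutRow (C : Set (Sym2 V)) (X : FiniteCutSet G) :
    ⇑(cutRow C X) = (C ∩ edgeCut G X.1).indicator 1 :=
  Finsupp.ofSupportFinite_coe

lemma cutRow_symmDiff (C : Set (Sym2 V)) (X Y : FiniteCutSet G) :
    cutRow C (X.symmDiff Y) = cutRow C X + cutRow C Y := by
  ext e
  simp only [Finsupp.coe_add, Pi.add_apply, coe_cutRow, FiniteCutSet.symmDiff, edgeCut_symmDiff]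
  by_cases hX : e ∈ C ∩ edgeCut G X.1 <;> by_cases hY : e ∈ C ∩ edgeCut G Y.1 <;>
    simp_all [Set.mem_symmDiff, CharTwo.add_self_eq_zero]

lemma sum_cutRow (C : Set (Sym2 V)) (X : FiniteCutSet G) (h : Sym2 V → ZMod 2) :
    (cutRow C X).sum (fun e a => a * h e) = ∑ᶠ e ∈ C ∩ edgeCut G X.1, h e := by
  have hfin := X.finite_inter C
  rw [finsum_mem_eq_finite_toFinset_sum _ hfin,
    Finsupp.sum_of_support_subset _ (s := hfin.toFinset) _ _ fun _ _ => zero_mul _]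
  · refine Finset.sum_congr rfl fun e he => ?_
    rw [coe_cutRow, Set.indicator_of_mem (hfin.mem_toFinset.1 he), Pi.one_apply, one_mul]
  · intro e he
    rw [Finsupp.mem_support_iff, coe_cutRow] at he
    exact hfin.mem_toFinset.2 (Set.mem_of_indicator_ne_zero he)

theorem exists_finsum_edgeCut_eq (C : Set (Sym2 V)) (b : Set V → ZMod 2)
    (hb_add : ∀ X Z, (edgeCut G X).Finite → (edgeCut G Z).Finite →
      b (symmDiff X Z) = b X + b Z)
    (hb_zero : ∀ X, (edgeCut G X).Finite → C ∩ edgeCut G X = ∅ → b X = 0) :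
    ∃ h : Sym2 V → ZMod 2,
      ∀ X, (edgeCut G X).Finite → ∑ᶠ e ∈ C ∩ edgeCut G X, h e = b X := by
  have h0 : edgeCut G ∅ = ∅ := by simp [edgeCut]
  let Y₀ : FiniteCutSet G := ⟨∅, by simp [h0]⟩
  have hY₀ : cutRow C Y₀ = 0 ∧ b Y₀ = 0 :=
    ⟨Finsupp.ext fun e => by simp [coe_cutRow, Y₀, h0],
      hb_zero ∅ (by simp [h0]) (by simp [h0])⟩
  -- Over `ℤ₂` a combination of equations is a sum of distinct ones, and `cutRow` and `b` turn
  -- symmetric differences into sums.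
  have hcomb (c : FiniteCutSet G →₀ ZMod 2) : ∃ Y : FiniteCutSet G,
      Finsupp.linearCombination _ (cutRow C) c = cutRow C Y ∧
        Finsupp.linearCombination _ (b ∘ (↑)) c = b Y := by
    induction c using Finsupp.induction_linear with
    | zero => exact ⟨Y₀, by simp [hY₀.1], by simp [hY₀.2]⟩
    | add c₁ c₂ ih₁ ih₂ =>
      obtain ⟨Y₁, hr₁, hb₁⟩ := ih₁
      obtain ⟨Y₂, hr₂, hb₂⟩ := ih₂
      refine ⟨Y₁.symmDiff Y₂, ?_, ?_⟩
      · rw [map_add, hr₁, hr₂, cutRow_symmDiff]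
      · rw [map_add, hb₁, hb₂, FiniteCutSet.symmDiff, hb_add _ _ Y₁.2 Y₂.2]
    | single X a =>
      rcases (by decide : ∀ a : ZMod 2, a = 0 ∨ a = 1) a with rfl | rfl
      · exact ⟨Y₀, by simp [hY₀.1], by simp [hY₀.2]⟩
      · exact ⟨X, by simp, by simp⟩
  have hcons (c : FiniteCutSet G →₀ ZMod 2)
      (hc : Finsupp.linearCombination _ (cutRow C) c = 0) :
      Finsupp.linearCombination _ (b ∘ (↑)) c = 0 := by
    obtain ⟨Y, hrY, hbY⟩ := hcomb c
    rw [hbY]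
    refine hb_zero _ Y.2 (Set.eq_empty_of_forall_notMem fun e he => ?_)
    have := congrArg (· e) (hrY ▸ hc)
    simp [coe_cutRow, he] at this
  obtain ⟨h, hh⟩ := Finsupp.exists_sum_mul_eq_of_consistent (cutRow C) (b ∘ (↑)) hcons
  exact ⟨h, fun X hX => (sum_cutRow C ⟨X, hX⟩ h).symm.trans (hh ⟨X, hX⟩)⟩

end CycleSpace

section Main

variable {V : Type*} {G : SimpleGraph V}

def IsOddExactlyOn (C : Set (Sym2 V)) (g : V → V → ZMod 4) : Prop :=
  ∀ x y, (s(x, y) ∈ C → toZMod2 (g x y) = 1) ∧ (s(x, y) ∉ C → g x y = 0)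

lemma exists_antisymm_isOddExactlyOn {C : Set (Sym2 V)} (hC : C ⊆ G.edgeSet) :
    ∃ c : V → V → ZMod 4, (∀ x y, c y x = -c x y) ∧ IsOddExactlyOn C c := by
  classical
  refine ⟨fun x y => if s(x, y) ∈ C then (if WellOrderingRel x y then 1 else -1) else 0,
    fun x y => ?_, fun x y => ⟨fun hxy => ?_, fun hxy => by simp [hxy]⟩⟩
  · simp only [Sym2.eq_swap (a := y)]
    by_cases hxyC : s(x, y) ∈ C
    · rcases trichotomous_of WellOrderingRel x y with h | rfl | h
      · simp [hxyC, h, asymm h]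
      · exact absurd (G.mem_edgeSet.1 (hC hxyC)) (G.loopless.irrefl x)
      · simp [hxyC, h, asymm h]
    · simp [hxyC]
  · simp only [hxy, if_true]
    split_ifs <;> decide

lemma exists_twice_finsum_eq {C : Set (Sym2 V)} (hC : InCycleSpace G C) {c : V → V → ZMod 4}
    (hc_anti : ∀ x y, c y x = -c x y) (hc : IsOddExactlyOn C c) :
    ∃ h : Sym2 V → ZMod 2, ∀ X, (edgeCut G X).Finite →
      twice (∑ᶠ e ∈ C ∩ edgeCut G X, h e) = ∑ᶠ p ∈ orientedCut G X, c p.1 p.2 := by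
  let O (X : Set V) : ZMod 4 := ∑ᶠ p ∈ orientedCut G X, c p.1 p.2
  have hO_even (X : Set V) (hX : (edgeCut G X).Finite) : toZMod2 (O X) = 0 := by
    rw [toZMod2_finsum_orientedCut (S := C) hX fun p _ => ?_, ZMod.natCast_eq_zero_iff_even]
    · exact hC.2 X hX
    · by_cases hp : s(p.1, p.2) ∈ C
      · simp [hp, (hc _ _).1 hp]
      · simp [hp, (hc _ _).2 hp]
  have hO_add (X Z : Set V) (hX : (edgeCut G X).Finite) (hZ : (edgeCut G Z).Finite) :
      O (symmDiff X Z) = O X + O Z := by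
    have hXZ := (hX.union hZ).subset (edgeCut_inter_subset (G := G) (X := X) (Z := Z))
    rw [finsum_orientedCut_add_symmDiff hc_anti hX hZ, two_mul_eq_zero _ (hO_even _ hXZ),
      add_zero]
  have hO_zero (X : Set V) (hCX : C ∩ edgeCut G X = ∅) : O X = 0 :=
    finsum_mem_eq_zero_of_forall_eq_zero fun p ⟨hp, hp1, hp2⟩ =>
      (hc _ _).2 fun hpC => hCX.subset ⟨hpC, p.1, p.2, hp, hp1, hp2, rfl⟩
  obtain ⟨h, hh⟩ := exists_finsum_edgeCut_eq C (fun X => half (O X))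
    (fun X Z hX hZ => by rw [hO_add X Z hX hZ, half_add _ _ (hO_even X hX) (hO_even Z hZ)])
    (fun X _ hCX => by rw [hO_zero X hCX]; rfl)
  exact ⟨h, fun X hX => by rw [hh X hX, twice_half _ (hO_even X hX)]⟩

theorem InCycleSpace.exists_isFlow {C : Set (Sym2 V)} (hC : InCycleSpace G C) :
    ∃ g : V → V → ZMod 4, IsFlow G g ∧ IsOddExactlyOn C g := by
  obtain ⟨c, hc_anti, hc⟩ := exists_antisymm_isOddExactlyOn hC.1
  obtain ⟨h, hh⟩ := exists_twice_finsum_eq hC hc_anti hc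
  refine ⟨fun x y => c x y + C.indicator (fun e => twice (h e)) s(x, y),
    ⟨fun x y => ?_, fun X hX => ?_⟩, fun x y => ⟨fun hxy => ?_, fun hxy => ?_⟩⟩
  · by_cases hxy : s(x, y) ∈ C <;>
      simp [hc_anti x y, Sym2.eq_swap (a := y), hxy, neg_twice, add_comm]
  · have hX' := orientedCut_finite_iff.1 hX
    rw [finsum_mem_add_distrib hX, finsum_orientedCut_indicator,
      ← AddMonoidHom.map_finsum_mem _ _ (hX'.subset Set.inter_subset_right), hh X hX',
      ← two_mul]
    refine two_mul_eq_zero _ ?_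
    rw [← hh X hX', toZMod2_twice]
  · simp [hxy, (hc x y).1 hxy, toZMod2_twice]
  · simp [hxy, (hc x y).2 hxy]

def edgesWith (G : SimpleGraph V) (P : V → V → Prop) : Set (Sym2 V) :=
  {e | ∃ x y, G.Adj x y ∧ P x y ∧ s(x, y) = e}

lemma edgesWith_subset_edgeSet (P : V → V → Prop) : edgesWith G P ⊆ G.edgeSet := by
  rintro e ⟨x, y, h, -, rfl⟩
  exact h

lemma mk_mem_edgesWith {P : V → V → Prop} (hP : ∀ x y, P x y → P y x) {u v : V} :
    s(u, v) ∈ edgesWith G P ↔ G.Adj u v ∧ P u v := by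
  constructor
  · rintro ⟨x, y, h, hxy, he⟩
    rcases Sym2.eq_iff.1 he with ⟨rfl, rfl⟩ | ⟨rfl, rfl⟩
    · exact ⟨h, hxy⟩
    · exact ⟨h.symm, hP _ _ hxy⟩
  · rintro ⟨h, huv⟩
    exact ⟨u, v, h, huv, rfl⟩

lemma mk_mem_edgesWith_toZMod2_eq_one {f : V → V → ZMod 4} (hf : ∀ x y, f y x = -f x y)
    {u v : V} :
    s(u, v) ∈ edgesWith G (fun x y => toZMod2 (f x y) = 1) ↔
      G.Adj u v ∧ toZMod2 (f u v) = 1 :=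
  mk_mem_edgesWith fun x y h => by rw [hf, map_neg, h]; decide

lemma IsFlow.inCycleSpace_toZMod2_eq_one {f : V → V → ZMod 4} (hf : IsFlow G f) :
    InCycleSpace G (edgesWith G fun x y => toZMod2 (f x y) = 1) := by
  refine ⟨edgesWith_subset_edgeSet _, fun X hX => ?_⟩
  have hsum := toZMod2_finsum_orientedCut (f := f)
    (S := edgesWith G fun x y => toZMod2 (f x y) = 1) hX fun p hp => ?_
  · rwa [hf.2 X (orientedCut_finite_iff.2 hX), map_zero, eq_comm,
      ZMod.natCast_eq_zero_iff_even] at hsum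
  · rcases toZMod2_eq_zero_or_eq_one (f p.1 p.2) with h | h
    · rw [h, Set.indicator_of_notMem fun hp' => by
        simp [((mk_mem_edgesWith_toZMod2_eq_one hf.1).1 hp').2] at h]
    · rw [h, Set.indicator_of_mem ((mk_mem_edgesWith_toZMod2_eq_one hf.1).2 ⟨hp.1, h⟩),
        Pi.one_apply]

lemma IsFlow.inCycleSpace_eq_two {k : V → V → ZMod 4} (hk : IsFlow G k)
    (hk_even : ∀ x y, G.Adj x y → toZMod2 (k x y) = 0) :
    InCycleSpace G (edgesWith G fun x y => k x y = 2) := by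
  have hmem {x y : V} :
      s(x, y) ∈ edgesWith G (fun x y => k x y = 2) ↔ G.Adj x y ∧ k x y = 2 :=
    mk_mem_edgesWith fun x y h => by rw [hk.1, h]; decide
  refine ⟨edgesWith_subset_edgeSet _, fun X hX => ?_⟩
  rw [← finsum_orientedCut_two_eq_zero_iff _ hX, ← hk.2 X (orientedCut_finite_iff.2 hX)]
  refine finsum_mem_congr rfl fun p hp => ?_
  by_cases h2 : k p.1 p.2 = 2
  · rw [Set.indicator_of_mem (hmem.2 ⟨hp.1, h2⟩), h2]
  · rw [Set.indicator_of_notMem fun h => h2 (hmem.1 h).2]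
    by_contra hne
    exact h2 (eq_two _ (hk_even _ _ hp.1) (Ne.symm hne))

theorem IsFlow.exists_inCycleSpace_union_eq {f : V → V → ZMod 4} (hf : IsFlow G f)
    (hf0 : ∀ x y, G.Adj x y → f x y ≠ 0) :
    ∃ C D : Set (Sym2 V), InCycleSpace G C ∧ InCycleSpace G D ∧ C ∪ D = G.edgeSet := by
  let C := edgesWith G fun x y => toZMod2 (f x y) = 1
  have hC : InCycleSpace G C := hf.inCycleSpace_toZMod2_eq_one
  have hf_even {x y : V} (hxy : G.Adj x y) (hxyC : s(x, y) ∉ C) : toZMod2 (f x y) = 0 :=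
    (toZMod2_eq_zero_or_eq_one _).resolve_right fun h =>
      hxyC ((mk_mem_edgesWith_toZMod2_eq_one hf.1).2 ⟨hxy, h⟩)
  obtain ⟨g, hg, hgC⟩ := hC.exists_isFlow
  have hfg_even (x y : V) (hxy : G.Adj x y) : toZMod2 ((f - g) x y) = 0 := by
    by_cases hxyC : s(x, y) ∈ C
    · rw [Pi.sub_apply, Pi.sub_apply, map_sub,
        ((mk_mem_edgesWith_toZMod2_eq_one hf.1).1 hxyC).2, (hgC x y).1 hxyC, sub_self]
    · rw [Pi.sub_apply, Pi.sub_apply, (hgC x y).2 hxyC, sub_zero, hf_even hxy hxyC]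
  refine ⟨C, _, hC, (hf.sub hg).inCycleSpace_eq_two hfg_even, Set.Subset.antisymm
    (Set.union_subset (edgesWith_subset_edgeSet _) (edgesWith_subset_edgeSet _)) fun e he => ?_⟩
  induction e using Sym2.ind with
  | _ x y =>
    have hxy : G.Adj x y := he
    by_cases hxyC : s(x, y) ∈ C
    · exact Or.inl hxyC
    · refine Or.inr ⟨x, y, hxy, ?_, rfl⟩
      show (f - g) x y = 2
      rw [Pi.sub_apply, Pi.sub_apply, (hgC x y).2 hxyC, sub_zero]
      exact eq_two _ (hf_even hxy hxyC) (hf0 x y hxy)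

theorem exists_isFlow_of_inCycleSpace_union_eq {C D : Set (Sym2 V)} (hC : InCycleSpace G C)
    (hD : InCycleSpace G D) (hCD : C ∪ D = G.edgeSet) :
    ∃ f : V → V → ZMod 4, (∀ x y, G.Adj x y → f x y ≠ 0) ∧ IsFlow G f := by
  obtain ⟨g, hg, hgC⟩ := hC.exists_isFlow
  refine ⟨g + fun x y => D.indicator (fun _ => 2) s(x, y), fun x y hxy => ?_, hg.add hD.isFlow⟩
  by_cases hxyC : s(x, y) ∈ C
  · intro h0
    have hind : toZMod2 (D.indicator (fun _ => 2) s(x, y)) = 0 := by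
      by_cases hxyD : s(x, y) ∈ D
      · rw [Set.indicator_of_mem hxyD]
        rfl
      · rw [Set.indicator_of_notMem hxyD, map_zero]
    have h0' := congrArg toZMod2 h0
    rw [Pi.add_apply, Pi.add_apply, map_add, (hgC x y).1 hxyC, hind, add_zero, map_zero] at h0'
    exact one_ne_zero h0'
  · have hxyD : s(x, y) ∈ D := ((hCD ▸ hxy : s(x, y) ∈ C ∪ D)).resolve_left hxyC
    simp only [Pi.add_apply, (hgC x y).2 hxyC, Set.indicator_of_mem hxyD, zero_add]
    decide

end Main

theorem stmt4_general {V : Type*} (G : SimpleGraph V) :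
    (∃ f : V → V → ZMod 4,
        (∀ x y, G.Adj x y → f x y ≠ 0) ∧
        (∀ x y : V, f y x = - f x y) ∧
        (∀ X : Set V, (orientedCut G X).Finite →
          ∑ᶠ p ∈ orientedCut G X, f p.1 p.2 = 0)) ↔
      (∃ C D : Set (Sym2 V), InCycleSpace G C ∧ InCycleSpace G D ∧
        C ∪ D = G.edgeSet) := by
  constructor
  · rintro ⟨f, hf0, hf⟩
    exact IsFlow.exists_inCycleSpace_union_eq hf hf0
  · rintro ⟨C, D, hC, hD, hCD⟩
    exact exists_isFlow_of_inCycleSpace_union_eq hC hD hCD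

/-- A locally finite graph has a non-elusive `ℤ₄`-flow iff its edge set is the union
of two elements of its topological cycle space. -/
theorem stmt4 {V : Type*} (G : SimpleGraph V)
    (hlf : ∀ v : V, (G.neighborSet v).Finite) :
    (∃ f : V → V → ZMod 4,
        (∀ x y, G.Adj x y → f x y ≠ 0) ∧
        (∀ x y : V, f y x = - f x y) ∧
        (∀ X : Set V, (orientedCut G X).Finite →
          ∑ᶠ p ∈ orientedCut G X, f p.1 p.2 = 0)) ↔
      (∃ C D : Set (Sym2 V), InCycleSpace G C ∧ InCycleSpace G D ∧
        C ∪ D = G.edgeSet) :=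
  stmt4_general G
end

section
/- Every finite supereulerian graph has a non-elusive ℤ₂⊕ℤ₂-flow (equivalently, a non-elusive ℤ₄-flow / 4-flow). -/
open Finset in
private lemma sym2_indicator_sum {V : Type*} [Fintype V] [DecidableEq V] {a c : V} (hac : a ≠ c) (v : V) :
    ∑ u : V, (if s(v, u) = s(a, c) then (1 : ZMod 2) else 0)
      = (if v = a then 1 else 0) + (if v = c then 1 else 0) := by
  by_cases hva : v = a
  · subst hva
    rw [if_pos rfl, if_neg hac]
    have h : ∀ u : V, (s(v, u) = s(v, c)) = (u = c) := fun u => propext Sym2.congr_right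
    simp only [h]
    simp
  · by_cases hvc : v = c
    · subst hvc
      rw [if_neg hva, if_pos rfl]
      have h : ∀ u : V, (s(v, u) = s(a, v)) = (u = a) := fun u =>
        propext (by rw [show s(a, v) = s(v, a) from Sym2.eq_swap]; exact Sym2.congr_right)
      simp only [h]
      simp
    · rw [if_neg hva, if_neg hvc]
      apply Finset.sum_eq_zero
      intro u _
      rw [if_neg]
      intro h
      rw [Sym2.eq_iff] at h
      tauto

open Finset in
private lemma walk_count_sum {V : Type*} [Fintype V] [DecidableEq V] {C : SimpleGraph V}
    {a b : V} (p : C.Walk a b) (v : V) :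
    ∑ u : V, ((p.edges.count s(v, u) : ℕ) : ZMod 2)
      = (if v = a then 1 else 0) + (if v = b then 1 else 0) := by
  induction p with
  | nil =>
    rename_i u
    simp only [SimpleGraph.Walk.edges_nil, List.count_nil, Nat.cast_zero, Finset.sum_const_zero]
    by_cases h : v = u
    · simp [h]
      decide
    · simp [h]
  | @cons a c b h q ih =>
    have hac : a ≠ c := h.ne
    simp only [SimpleGraph.Walk.edges_cons, List.count_cons]
    push_cast
    rw [Finset.sum_add_distrib, ih]
    have hs : ∀ x : V, (if (s(a, c) == s(v, x)) = true then (1 : ZMod 2) else 0)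
        = (if s(v, x) = s(a, c) then 1 else 0) := by
      intro x
      simp only [beq_iff_eq]
      exact if_congr eq_comm rfl rfl
    rw [show (∑ x : V, if (s(a, c) == s(v, x)) = true then (1 : ZMod 2) else 0)
        = ∑ x : V, (if s(v, x) = s(a, c) then 1 else 0) from
      Finset.sum_congr rfl (fun x _ => hs x), sym2_indicator_sum hac v]
    by_cases h1 : v = a <;> by_cases h2 : v = c <;> by_cases h3 : v = b <;>
      simp_all <;> decide


/-- Every finite supereulerian graph (one with a spanning connected subgraph all of
whose degrees are even) has a non-elusive `ℤ₂⊕ℤ₂`-flow: a map assigning nonzero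
elements of `ℤ₂⊕ℤ₂` to the edges so that the sum over the edges at each vertex is
zero. -/
theorem stmt7 {V : Type*} [Fintype V] (G : SimpleGraph V)
    (C : SimpleGraph V) (hCG : C ≤ G) (hCconn : C.Connected)
    (hCeven : ∀ v : V, Even ((C.neighborSet v).ncard)) :
    ∃ f : Sym2 V → ZMod 2 × ZMod 2,
      (∀ e ∈ G.edgeSet, f e ≠ 0) ∧
      ∀ v : V, ∑ᶠ u ∈ G.neighborSet v, f s(v, u) = 0 := by
  classical
  obtain ⟨r⟩ := hCconn.nonempty
  set p : ∀ a : V, C.Walk r a := fun a => (hCconn.preconnected r a).some with hp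
  set d : V → ZMod 2 := fun v => (G.degree v : ZMod 2) + (C.degree v : ZMod 2) with hd
  set g : Sym2 V → ZMod 2 := fun e => ∑ a : V, d a * ((p a).edges.count e : ZMod 2) with hg
  -- C degrees are even
  have hCdeg : ∀ v : V, (C.degree v : ZMod 2) = 0 := by
    intro v
    have h1 : (C.neighborSet v).ncard = C.degree v := by
      rw [Set.ncard_eq_toFinset_card']
      rfl
    have h2 : Even (C.degree v) := h1 ▸ hCeven v
    obtain ⟨k, hk⟩ := h2
    have hall : ∀ x : ZMod 2, x + x = 0 := by decide
    rw [hk]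
    push_cast
    exact hall _
  have hall : ∀ x : ZMod 2, x + x = 0 := by decide
  -- sum of d is zero
  have hdegsum : ∀ (H : SimpleGraph V), ∑ a : V, ((H.degree a : ℕ) : ZMod 2) = 0 := by
    intro H
    rw [← Nat.cast_sum, SimpleGraph.sum_degrees_eq_twice_card_edges, Nat.cast_mul]
    have : ((2 : ℕ) : ZMod 2) = 0 := by decide
    rw [this, zero_mul]
  have hd0 : ∑ a : V, d a = 0 := by
    rw [hd, Finset.sum_add_distrib, hdegsum G, hdegsum C, add_zero]
  -- g is supported on C-edges
  have gsupp : ∀ e : Sym2 V, e ∉ C.edgeSet → g e = 0 := by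
    intro e he
    rw [hg]
    apply Finset.sum_eq_zero
    intro a _
    have : (p a).edges.count e = 0 := by
      rw [List.count_eq_zero]
      exact fun hmem => he ((p a).edges_subset_edgeSet hmem)
    rw [this]
    simp
  -- key vertex sum for g
  have gsum : ∀ v : V, ∑ u : V, g s(v, u) = d v := by
    intro v
    rw [hg]
    rw [Finset.sum_comm]
    have : ∀ a : V, ∑ u : V, d a * ((((p a).edges.count s(v, u)) : ℕ) : ZMod 2)
        = d a * ((if v = r then 1 else 0) + (if v = a then 1 else 0)) := by
      intro a
      rw [← Finset.mul_sum, walk_count_sum (p a) v]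
    rw [Finset.sum_congr rfl (fun a _ => this a)]
    simp only [mul_add]
    rw [Finset.sum_add_distrib]
    have h1 : ∑ a : V, d a * (if v = r then 1 else 0) = 0 := by
      rw [← Finset.sum_mul, hd0, zero_mul]
    have h2 : ∑ a : V, d a * (if v = a then 1 else 0) = d v := by
      simp only [mul_ite, mul_one, mul_zero]
      rw [Finset.sum_ite_eq]
      simp
    rw [h1, h2, zero_add]
  -- the flow
  refine ⟨fun e => (if e ∈ C.edgeSet then g e else 1, if e ∈ C.edgeSet then 1 else 0), ?_, ?_⟩
  · intro e he
    by_cases hc : e ∈ C.edgeSet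
    · simp only [hc, if_pos, Ne, Prod.mk_eq_zero, not_and]
      intro _
      exact one_ne_zero
    · simp only [hc, if_neg, Ne, Prod.mk_eq_zero, not_and, ite_false]
      intro h
      exact absurd h one_ne_zero
  · intro v
    have hconv : ∑ᶠ u ∈ G.neighborSet v,
        ((fun e => ((if e ∈ C.edgeSet then g e else 1 : ZMod 2),
          (if e ∈ C.edgeSet then 1 else 0 : ZMod 2))) s(v, u))
        = ∑ u ∈ G.neighborFinset v,
          ((if s(v, u) ∈ C.edgeSet then g s(v, u) else 1 : ZMod 2),
           (if s(v, u) ∈ C.edgeSet then 1 else 0 : ZMod 2)) := by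
      rw [SimpleGraph.neighborFinset_def, ← finsum_mem_coe_finset, Set.coe_toFinset]
    rw [hconv]
    -- subset of neighbor finsets
    have hsub : C.neighborFinset v ⊆ G.neighborFinset v := by
      intro u hu
      rw [SimpleGraph.mem_neighborFinset] at hu ⊢
      exact hCG hu
    -- the indicator sum equals the C-degree
    have hite : ∑ u ∈ G.neighborFinset v, (if s(v, u) ∈ C.edgeSet then (1 : ZMod 2) else 0)
        = (C.degree v : ZMod 2) := by
      have hpt : ∀ u ∈ G.neighborFinset v,
          (if s(v, u) ∈ C.edgeSet then (1 : ZMod 2) else 0)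
            = (if u ∈ C.neighborFinset v then (1 : ZMod 2) else 0) := by
        intro u _
        congr 1
        simp [SimpleGraph.mem_neighborFinset, SimpleGraph.mem_edgeSet]
      rw [Finset.sum_congr rfl hpt, Finset.sum_ite_mem,
        Finset.inter_eq_right.mpr hsub, Finset.sum_const, nsmul_eq_mul, mul_one]
      rfl
    -- extension of g-sum to the whole vertex set
    have hgext : ∑ u ∈ G.neighborFinset v, g s(v, u) = ∑ u : V, g s(v, u) := by
      apply Finset.sum_subset (Finset.subset_univ _)
      intro u _ hu
      apply gsupp
      rw [SimpleGraph.mem_edgeSet]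
      intro hadj
      exact hu (by rw [SimpleGraph.mem_neighborFinset]; exact hCG hadj)
    rw [Prod.ext_iff]
    constructor
    · rw [Prod.fst_sum]
      simp only
      have hpt : ∀ u ∈ G.neighborFinset v,
          (if s(v, u) ∈ C.edgeSet then g s(v, u) else 1)
            = g s(v, u) + (1 + (if s(v, u) ∈ C.edgeSet then (1 : ZMod 2) else 0)) := by
        intro u _
        by_cases hc : s(v, u) ∈ C.edgeSet
        · rw [if_pos hc, if_pos hc, hall, add_zero]
        · rw [if_neg hc, if_neg hc, gsupp _ hc, zero_add, add_zero]
      rw [Finset.sum_congr rfl hpt, Finset.sum_add_distrib, Finset.sum_add_distrib,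
        hgext, gsum, hite, Finset.sum_const, nsmul_eq_mul, mul_one]
      have hcard : ((G.neighborFinset v).card : ZMod 2) = (G.degree v : ZMod 2) := rfl
      rw [hcard, hd, Prod.fst_zero]
      simp only
      simp [hCdeg, hall]
    · rw [Prod.snd_sum]
      simp only [Prod.snd]
      rw [hite, hCdeg, Prod.snd_zero]
end

section
/- Every 4-edge-connected (possibly infinite) graph has a 4-flow. -/
/-!
A compactness argument reduces the theorem to finite multigraphs. Orient the edges along a
well-order of `V`; the weightings of the edges by `{±1, ±2, ±3}` form a compact space, in which
the weightings summing to zero across a given finite cut form a closed set. For finitely many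
vertex sets `X₁, …, Xₙ` with finite cuts, contracting each atom of the Boolean algebra they
generate gives a finite multigraph, still `4`-edge-connected, whose `4`-flows lift to weightings
balanced across every `Xᵢ`.

In a finite `4`-edge-connected multigraph, a maximal pair of edge-disjoint forests consists of two
spanning trees (the Nash-Williams–Tutte exchange argument). A spanning tree yields a `±1`-valued
circulation that is nonzero off the tree: a join inside the tree fixes the parity of the degrees
of the edges off it, and the resulting even subgraph is oriented. If `g₁, g₂` come from two
disjoint spanning trees, `g₁ + 2 g₂` is a nowhere-zero `4`-flow (Jaeger).
-/

lemma ZMod.add_one_eq_zero_of_ne_zero {z : ZMod 2} (hz : z ≠ 0) : z + 1 = 0 := by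
  revert z
  decide

open Finset

namespace FinMultigraph

open scoped Classical

-- A multigraph with vertices `Q`, edges `E` and ends `s e`, `t e`; loops and parallel edges are
-- allowed. Subgraphs are given by their edge sets `S : Finset E`.
variable {Q E : Type*} (s t : E → Q)

def Adj (S : Finset E) (a b : Q) : Prop :=
  ∃ e ∈ S, (s e = a ∧ t e = b) ∨ (s e = b ∧ t e = a)

def Reachable (S : Finset E) : Q → Q → Prop := Relation.ReflTransGen (Adj s t S)

variable {s t} {S T : Finset E} {a b c x y : Q} {e f : E}

lemma Adj.symm (h : Adj s t S a b) : Adj s t S b a := by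
  obtain ⟨e, he, h⟩ := h
  exact ⟨e, he, h.symm⟩

namespace Reachable

lemma refl (S : Finset E) (a : Q) : Reachable s t S a a := Relation.ReflTransGen.refl

lemma trans (h : Reachable s t S a b) (h' : Reachable s t S b c) : Reachable s t S a c :=
  Relation.ReflTransGen.trans h h'

lemma symm (h : Reachable s t S a b) : Reachable s t S b a := by
  induction h with
  | refl => exact refl S a
  | tail _ hbc ih => exact (Relation.ReflTransGen.single hbc.symm).trans ih

lemma mono (hST : S ⊆ T) (h : Reachable s t S a b) : Reachable s t T a b :=
  Relation.ReflTransGen.mono (fun _ _ ⟨e, he, h⟩ => ⟨e, hST he, h⟩) _ _ h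

lemma of_forall_mem (hST : ∀ e ∈ S, Reachable s t T (s e) (t e))
    (h : Reachable s t S a b) : Reachable s t T a b := by
  induction h with
  | refl => exact refl T a
  | tail _ hbc ih =>
    obtain ⟨e, he, ⟨rfl, rfl⟩ | ⟨rfl, rfl⟩⟩ := hbc
    · exact ih.trans (hST e he)
    · exact ih.trans (hST e he).symm

end Reachable

lemma reachable_of_mem (he : e ∈ S) : Reachable s t S (s e) (t e) :=
  Relation.ReflTransGen.single ⟨e, he, Or.inl ⟨rfl, rfl⟩⟩

lemma eq_of_reachable_empty (h : Reachable s t (∅ : Finset E) a b) : a = b := by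
  induction h with
  | refl => rfl
  | tail _ hbc => obtain ⟨e, he, _⟩ := hbc; simp at he

lemma reachable_insert_iff :
    Reachable s t (insert e S) x y ↔ Reachable s t S x y ∨
      (Reachable s t S x (s e) ∧ Reachable s t S (t e) y) ∨
      (Reachable s t S x (t e) ∧ Reachable s t S (s e) y) := by
  constructor
  · intro h
    induction h with
    | refl => exact Or.inl (.refl S x)
    | @tail b c _ hbc ih =>
      obtain ⟨f, hf, hfbc⟩ := hbc
      rcases mem_insert.mp hf with rfl | hf
      · rcases hfbc with ⟨rfl, rfl⟩ | ⟨rfl, rfl⟩ <;>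
          rcases ih with h | ⟨h, -⟩ | ⟨h, -⟩ <;> simp [h, Reachable.refl]
      · have hbc : Reachable s t S b c := .single ⟨f, hf, hfbc⟩
        rcases ih with h | ⟨h, h'⟩ | ⟨h, h'⟩
        · exact Or.inl (h.trans hbc)
        · exact Or.inr (Or.inl ⟨h, h'.trans hbc⟩)
        · exact Or.inr (Or.inr ⟨h, h'.trans hbc⟩)
  · have hsub : S ⊆ insert e S := subset_insert _ _
    have he : Reachable s t (insert e S) (s e) (t e) := reachable_of_mem (mem_insert_self _ _)
    rintro (h | ⟨h, h'⟩ | ⟨h, h'⟩)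
    · exact h.mono hsub
    · exact ((h.mono hsub).trans he).trans (h'.mono hsub)
    · exact ((h.mono hsub).trans he.symm).trans (h'.mono hsub)

lemma reachable_insert_iff_of_reachable (he : Reachable s t S (s e) (t e)) :
    Reachable s t (insert e S) x y ↔ Reachable s t S x y := by
  rw [reachable_insert_iff]
  refine ⟨?_, Or.inl⟩
  rintro (h | ⟨h, h'⟩ | ⟨h, h'⟩)
  · exact h
  · exact (h.trans he).trans h'
  · exact (h.trans he.symm).trans h'

section Components

variable [Fintype Q]

variable (s t) in
noncomputable def component (S : Finset E) (a : Q) : Finset Q := univ.filter (Reachable s t S a)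

variable (s t) in
noncomputable def components (S : Finset E) : Finset (Finset Q) := univ.image (component s t S)

variable (s t) in
noncomputable def numComponents (S : Finset E) : ℕ := #(components s t S)

lemma mem_component : b ∈ component s t S a ↔ Reachable s t S a b := by
  simp [component]

lemma mem_component_self (S : Finset E) (a : Q) : a ∈ component s t S a :=
  mem_component.mpr (.refl S a)

lemma component_eq_iff : component s t S a = component s t S b ↔ Reachable s t S a b := by
  refine ⟨fun h => (mem_component.mp (h ▸ mem_component_self S a)).symm, fun h => ?_⟩
  ext c
  simp only [mem_component]
  exact ⟨h.symm.trans, h.trans⟩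

lemma component_mem_components (S : Finset E) (a : Q) : component s t S a ∈ components s t S :=
  mem_image_of_mem _ (mem_univ a)

lemma mem_components {C : Finset Q} : C ∈ components s t S ↔ ∃ a, component s t S a = C := by
  simp [components]

lemma numComponents_le_of_reachable_imp (h : ∀ x y, Reachable s t S x y → Reachable s t T x y) :
    numComponents s t T ≤ numComponents s t S := by
  refine card_le_card_of_surjOn
    (fun C => if hC : C.Nonempty then component s t T hC.choose else ∅) ?_
  intro D hD
  obtain ⟨a, rfl⟩ := mem_components.mp hD
  have ha : (component s t S a).Nonempty := ⟨a, mem_component_self S a⟩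
  refine ⟨component s t S a, component_mem_components S a, ?_⟩
  simp only [dif_pos ha]
  exact component_eq_iff.mpr (h _ _ (mem_component.mp ha.choose_spec)).symm

lemma numComponents_congr (h : ∀ x y, Reachable s t S x y ↔ Reachable s t T x y) :
    numComponents s t S = numComponents s t T :=
  le_antisymm (numComponents_le_of_reachable_imp fun x y => (h x y).mpr)
    (numComponents_le_of_reachable_imp fun x y => (h x y).mp)

lemma numComponents_empty : numComponents s t (∅ : Finset E) = Fintype.card Q := by
  have h : component s t (∅ : Finset E) = fun a => {a} := by
    funext a
    ext b
    simp only [mem_component, mem_singleton]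
    exact ⟨fun h => (eq_of_reachable_empty h).symm, fun h => h ▸ .refl _ _⟩
  rw [numComponents, components, h, card_image_of_injective _ singleton_injective, card_univ]

lemma one_le_numComponents [Nonempty Q] (S : Finset E) : 1 ≤ numComponents s t S :=
  card_pos.mpr ⟨_, component_mem_components S (Classical.arbitrary Q)⟩

lemma reachable_of_numComponents_le_one (h : numComponents s t S ≤ 1) (a b : Q) :
    Reachable s t S a b :=
  component_eq_iff.mp (card_le_one.mp h _ (component_mem_components S a) _
    (component_mem_components S b))

lemma numComponents_insert_of_reachable (he : Reachable s t S (s e) (t e)) :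
    numComponents s t (insert e S) = numComponents s t S :=
  numComponents_congr fun _ _ => reachable_insert_iff_of_reachable he

lemma component_insert_of_not_reachable (he : ¬ Reachable s t S (s e) (t e)) (a : Q) :
    component s t (insert e S) a =
      if Reachable s t S a (s e) ∨ Reachable s t S a (t e) then
        component s t S (s e) ∪ component s t S (t e)
      else component s t S a := by
  ext b
  simp only [mem_component, reachable_insert_iff]
  split_ifs with ha
  · rw [mem_union, mem_component, mem_component]
    rcases ha with ha | ha
    · have : ¬ Reachable s t S a (t e) := fun h => he (ha.symm.trans h)
      grind [Reachable.trans, Reachable.symm]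
    · have : ¬ Reachable s t S a (s e) := fun h => he (h.symm.trans ha)
      grind [Reachable.trans, Reachable.symm]
  · rw [mem_component]
    rw [not_or] at ha
    grind

lemma components_insert_of_not_reachable (he : ¬ Reachable s t S (s e) (t e)) :
    components s t (insert e S) =
      insert (component s t S (s e) ∪ component s t S (t e))
        (((components s t S).erase (component s t S (s e))).erase (component s t S (t e))) := by
  ext C
  simp only [mem_insert, mem_erase, mem_components, component_insert_of_not_reachable he]
  constructor
  · rintro ⟨a, rfl⟩
    split_ifs with ha
    · exact Or.inl rfl
    · rw [not_or] at ha
      exact Or.inr ⟨fun h => ha.2 (component_eq_iff.mp h),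
        fun h => ha.1 (component_eq_iff.mp h), a, rfl⟩
  · rintro (rfl | ⟨hv, hu, a, rfl⟩)
    · exact ⟨s e, by rw [if_pos (Or.inl (.refl S _))]⟩
    · refine ⟨a, ?_⟩
      rw [if_neg]
      rintro (h | h)
      exacts [hu (component_eq_iff.mpr h), hv (component_eq_iff.mpr h)]

lemma numComponents_insert_of_not_reachable (he : ¬ Reachable s t S (s e) (t e)) :
    numComponents s t (insert e S) + 1 = numComponents s t S := by
  set U := component s t S (s e)
  set W := component s t S (t e)
  have hUW : U ≠ W := fun h => he (component_eq_iff.mp h)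
  have hU : U ∈ components s t S := component_mem_components S _
  have hW : W ∈ (components s t S).erase U :=
    mem_erase.mpr ⟨hUW.symm, component_mem_components S _⟩
  have hUnion : U ∪ W ∉ ((components s t S).erase U).erase W := by
    intro h
    obtain ⟨a, ha⟩ := mem_components.mp (mem_of_mem_erase (mem_of_mem_erase h))
    have hu : s e ∈ component s t S a := ha ▸ mem_union_left _ (mem_component_self S _)
    have hw : t e ∈ component s t S a := ha ▸ mem_union_right _ (mem_component_self S _)
    exact he ((mem_component.mp hu).symm.trans (mem_component.mp hw))
  have h2 : 2 ≤ #(components s t S) := one_lt_card.mpr ⟨U, hU, W, mem_of_mem_erase hW, hUW⟩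
  rw [numComponents, numComponents, components_insert_of_not_reachable he,
    card_insert_of_notMem hUnion, card_erase_of_mem hW, card_erase_of_mem hU]
  omega

lemma card_le_card_add_numComponents (S : Finset E) :
    Fintype.card Q ≤ #S + numComponents s t S := by
  induction S using Finset.induction_on with
  | empty => simp [numComponents_empty]
  | @insert e S he ih =>
    rw [card_insert_of_notMem he]
    by_cases h : Reachable s t S (s e) (t e)
    · rw [numComponents_insert_of_reachable h]; omega
    · have := numComponents_insert_of_not_reachable h; omega

lemma ne_univ_of_mem_components (hS : 2 ≤ numComponents s t S) {C : Finset Q}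
    (hC : C ∈ components s t S) : C ≠ univ := by
  obtain ⟨a, rfl⟩ := mem_components.mp hC
  intro huniv
  have key : ∀ D ∈ components s t S, D = component s t S a := by
    intro D hD
    obtain ⟨b, rfl⟩ := mem_components.mp hD
    exact (component_eq_iff.mpr (mem_component.mp (huniv ▸ mem_univ b))).symm
  obtain ⟨D, hD, D', hD', hDD'⟩ := one_lt_card.mp hS
  exact hDD' ((key D hD).trans (key D' hD').symm)

end Components

section Forest

variable [Fintype Q]

variable (s t) in
/-- Acyclicity, in its counting form. -/
def IsForest (S : Finset E) : Prop := #S + numComponents s t S = Fintype.card Q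

lemma isForest_empty : IsForest s t (∅ : Finset E) := by
  simp [IsForest, numComponents_empty]

lemma IsForest.insert_of_not_reachable (hS : IsForest s t S) (he : ¬ Reachable s t S (s e) (t e)) :
    IsForest s t (insert e S) := by
  have heS : e ∉ S := fun h => he (reachable_of_mem h)
  have := numComponents_insert_of_not_reachable he
  unfold IsForest at *
  rw [card_insert_of_notMem heS]
  omega

lemma IsForest.erase_of_mem (hS : IsForest s t S) (he : e ∈ S) :
    IsForest s t (S.erase e) ∧ ¬ Reachable s t (S.erase e) (s e) (t e) := by
  have hcard : #(S.erase e) + 1 = #S := card_erase_add_one he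
  have hle := card_le_card_add_numComponents (s := s) (t := t) (S.erase e)
  have hins : insert e (S.erase e) = S := insert_erase he
  unfold IsForest at *
  by_cases h : Reachable s t (S.erase e) (s e) (t e)
  · have := numComponents_insert_of_reachable h
    rw [hins] at this
    omega
  · have := numComponents_insert_of_not_reachable h
    rw [hins] at this
    exact ⟨by omega, h⟩

lemma IsForest.anti (hS : IsForest s t S) (hTS : T ⊆ S) : IsForest s t T := by
  induction S using Finset.strongInduction with
  | _ S ih =>
    obtain rfl | hTS' := hTS.eq_or_ssubset
    · exact hS
    obtain ⟨e, heS, heT⟩ := exists_of_ssubset hTS'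
    exact ih _ (erase_ssubset heS) (hS.erase_of_mem heS).1 (subset_erase.mpr ⟨hTS, heT⟩)

/-- Otherwise `e` and `f` would both join the same two components of `S \ {e, f}`, closing a
cycle. -/
lemma IsForest.reachable_erase_erase (hF : IsForest s t S) (he : e ∈ S) (hf : f ∈ S)
    (hef : e ≠ f) (he' : Reachable s t (S.erase e) a b) (hf' : Reachable s t (S.erase f) a b) :
    Reachable s t ((S.erase e).erase f) a b := by
  by_contra hab
  set R := (S.erase e).erase f
  have hRe : insert e R = S.erase f := by
    simp only [R]; rw [erase_right_comm]; exact insert_erase (mem_erase.mpr ⟨hef, he⟩)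
  have hRf : insert f R = S.erase e := insert_erase (mem_erase.mpr ⟨hef.symm, hf⟩)
  have hRS : insert f (insert e R) = S := by rw [hRe]; exact insert_erase hf
  have hR : IsForest s t R := hF.anti ((erase_subset _ _).trans (erase_subset _ _))
  -- both `e` and `f` join the component of `a` to that of `b` in `R`
  have ends : ∀ g, Reachable s t (insert g R) a b →
      (Reachable s t R a (s g) ∧ Reachable s t R (t g) b) ∨
        (Reachable s t R a (t g) ∧ Reachable s t R (s g) b) := fun g h =>
    (reachable_insert_iff.mp h).resolve_left hab
  have hEe := ends e (hRe ▸ hf')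
  have hEf := ends f (hRf ▸ he')
  have hne : ¬ Reachable s t R (s e) (t e) := by
    rintro h
    rcases hEe with ⟨h1, h2⟩ | ⟨h1, h2⟩
    exacts [hab ((h1.trans h).trans h2), hab ((h1.trans h.symm).trans h2)]
  have hnf : Reachable s t (insert e R) (s f) (t f) := by
    have hab' : Reachable s t (insert e R) a b := hRe ▸ hf'
    have hsub : R ⊆ insert e R := subset_insert _ _
    rcases hEf with ⟨h1, h2⟩ | ⟨h1, h2⟩
    · exact ((h1.mono hsub).symm.trans hab').trans (h2.mono hsub).symm
    · exact (((h1.mono hsub).symm.trans hab').trans (h2.mono hsub).symm).symm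
  have h1 := numComponents_insert_of_not_reachable hne
  have h2 := numComponents_insert_of_reachable hnf
  have hcard : #R + 2 = #S := by
    rw [← hRS, card_insert_of_notMem, card_insert_of_notMem] <;> simp [R, hef, hef.symm]
  rw [hRS] at h2
  unfold IsForest at hF hR
  omega

variable (s t) in
/-- The edges of `S` lying on every route from `a` to `b`. -/
noncomputable def bridges (S : Finset E) (a b : Q) : Finset E :=
  S.filter fun e => ¬ Reachable s t (S.erase e) a b

lemma IsForest.reachable_bridges (hF : IsForest s t S) (h : Reachable s t S a b) :
    Reachable s t (bridges s t S a b) a b := by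
  induction S using Finset.strongInduction with
  | _ S ih =>
    by_cases hall : ∀ e ∈ S, ¬ Reachable s t (S.erase e) a b
    · rwa [bridges, filter_true_of_mem hall]
    simp only [not_forall, not_not] at hall
    obtain ⟨e, he, hab⟩ := hall
    refine (ih _ (erase_ssubset he) (hF.erase_of_mem he).1 hab).mono fun f hf => ?_
    simp only [bridges, mem_filter, mem_erase] at hf ⊢
    obtain ⟨⟨hfe, hfS⟩, hf⟩ := hf
    exact ⟨hfS, fun h => hf (hF.reachable_erase_erase he hfS (Ne.symm hfe) hab h)⟩

end Forest

section Cuts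

variable [Fintype E]

variable (s t) in
noncomputable def cut (Y : Finset Q) : Finset E :=
  univ.filter fun e => (s e ∈ Y ∧ t e ∉ Y) ∨ (t e ∈ Y ∧ s e ∉ Y)

variable (s t) in
noncomputable def outEdges (Y : Finset Q) : Finset E := univ.filter fun e => s e ∈ Y ∧ t e ∉ Y

lemma mem_outEdges {Y : Finset Q} : e ∈ outEdges s t Y ↔ s e ∈ Y ∧ t e ∉ Y := by
  simp [outEdges]

lemma mem_cut {Y : Finset Q} :
    e ∈ cut s t Y ↔ (s e ∈ Y ∧ t e ∉ Y) ∨ (t e ∈ Y ∧ s e ∉ Y) := by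
  simp [cut]

lemma card_components_filter_mem_cut [Fintype Q] (e : E) :
    #((components s t S).filter fun C => e ∈ cut s t C) =
      if Reachable s t S (s e) (t e) then 0 else 2 := by
  split_ifs with he
  · refine card_eq_zero.mpr (filter_eq_empty_iff.mpr fun C hC => ?_)
    obtain ⟨a, rfl⟩ := mem_components.mp hC
    simp only [mem_cut, mem_component]
    grind [Reachable.trans, Reachable.symm]
  · rw [← card_pair fun h => he (component_eq_iff.mp h)]
    congr 1
    ext C
    simp only [mem_filter, mem_insert, mem_singleton, mem_components, mem_cut]
    constructor
    · rintro ⟨⟨a, rfl⟩, (⟨h, -⟩ | ⟨h, -⟩)⟩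
      exacts [Or.inl (component_eq_iff.mpr (mem_component.mp h)),
        Or.inr (component_eq_iff.mpr (mem_component.mp h))]
    · rintro (rfl | rfl)
      · exact ⟨⟨_, rfl⟩, Or.inl ⟨mem_component_self S _, fun h => he (mem_component.mp h)⟩⟩
      · exact ⟨⟨_, rfl⟩, Or.inr ⟨mem_component_self S _, fun h => he (mem_component.mp h).symm⟩⟩

/-- Double counting: each component has at least four boundary edges, and an edge joining two
components lies on the boundary of exactly two of them. -/
lemma two_mul_numComponents_le [Fintype Q]
    (hcut : ∀ Y : Finset Q, Y.Nonempty → Y ≠ univ → 4 ≤ #(cut s t Y))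
    (hS : 2 ≤ numComponents s t S) :
    2 * numComponents s t S ≤ #(univ.filter fun e => ¬ Reachable s t S (s e) (t e)) := by
  have hdouble : ∑ C ∈ components s t S, #(cut s t C) =
      ∑ e, #((components s t S).filter fun C => e ∈ cut s t C) := by
    simpa [bipartiteAbove, bipartiteBelow] using
      sum_card_bipartiteAbove_eq_sum_card_bipartiteBelow (s := components s t S)
        (t := univ) (fun C e => e ∈ cut s t C)
  have : 4 * numComponents s t S ≤ 2 * #(univ.filter fun e => ¬ Reachable s t S (s e) (t e)) :=
    calc 4 * numComponents s t S = ∑ C ∈ components s t S, 4 := by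
          rw [sum_const, smul_eq_mul, mul_comm, numComponents]
      _ ≤ ∑ C ∈ components s t S, #(cut s t C) := by
          refine sum_le_sum fun C hC => hcut C ?_ (ne_univ_of_mem_components hS hC)
          obtain ⟨a, rfl⟩ := mem_components.mp hC
          exact ⟨a, mem_component_self S a⟩
      _ = 2 * #(univ.filter fun e => ¬ Reachable s t S (s e) (t e)) := by
          rw [hdouble, card_filter, mul_sum]
          refine sum_congr rfl fun e _ => ?_
          rw [card_components_filter_mem_cut]
          split_ifs <;> rfl
  omega

end Cuts

section TwoForests

variable {P P₀ : Bool → Finset E} {F : Finset E} {i j : Bool}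

def size (P : Bool → Finset E) : ℕ := #(P true) + #(P false)

lemma size_update (P : Bool → Finset E) (i : Bool) (F : Finset E) :
    size (Function.update P i F) + #(P i) = size P + #F := by
  cases i <;> simp [size] <;> omega

def IsFree (P : Bool → Finset E) (e : E) : Prop := ∀ i, e ∉ P i

variable (s t) in
def ExchangeStep (P P' : Bool → Finset E) : Prop :=
  ∃ i e f, IsFree P e ∧ f ∈ bridges s t (P i) (s e) (t e) ∧
    P' = Function.update P i (insert e ((P i).erase f))

variable (s t) in
def Exchangeable (P₀ : Bool → Finset E) : (Bool → Finset E) → Prop :=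
  Relation.ReflTransGen (ExchangeStep s t) P₀

section

variable [Fintype E]

variable (s t) in
noncomputable def freeable (P₀ : Bool → Finset E) : Finset E :=
  univ.filter fun e => ∃ P, Exchangeable s t P₀ P ∧ IsFree P e

lemma mem_freeable (h : Exchangeable s t P₀ P) (he : IsFree P e) : e ∈ freeable s t P₀ :=
  mem_filter.mpr ⟨mem_univ _, P, h, he⟩

end

variable [Fintype Q]

variable (s t) in
def IsForestPair (P : Bool → Finset E) : Prop :=
  (∀ i, IsForest s t (P i)) ∧ Disjoint (P true) (P false)

lemma IsForestPair.disjoint (hP : IsForestPair s t P) (i : Bool) : Disjoint (P i) (P !i) := by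
  cases i
  exacts [hP.2.symm, hP.2]

lemma IsForestPair.update (hP : IsForestPair s t P) (hF : IsForest s t F)
    (hFP : Disjoint F (P !i)) : IsForestPair s t (Function.update P i F) := by
  refine ⟨fun j => ?_, ?_⟩
  · by_cases hj : j = i
    · subst hj; simpa using hF
    · simpa [Function.update_of_ne hj] using hP.1 j
  · cases i
    · simpa using hFP.symm
    · simpa using hFP

lemma IsForestPair.exchange (hP : IsForestPair s t P) (he : IsFree P e)
    (hf : f ∈ bridges s t (P i) (s e) (t e)) :
    IsForestPair s t (Function.update P i (insert e ((P i).erase f))) ∧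
      size (Function.update P i (insert e ((P i).erase f))) = size P ∧
      IsFree (Function.update P i (insert e ((P i).erase f))) f := by
  obtain ⟨hfP, hbr⟩ := mem_filter.mp hf
  have heP : e ∉ (P i).erase f := fun h => he i (mem_of_mem_erase h)
  have hsize := size_update P i (insert e ((P i).erase f))
  rw [card_insert_of_notMem heP, card_erase_add_one hfP] at hsize
  refine ⟨hP.update (((hP.1 i).erase_of_mem hfP).1.insert_of_not_reachable hbr) ?_,
    by omega, fun j => ?_⟩
  · exact disjoint_insert_left.mpr ⟨he _, (hP.disjoint i).mono_left (erase_subset _ _)⟩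
  · by_cases hj : j = i
    · subst hj
      simp only [Function.update_self, mem_insert, mem_erase, ne_eq, not_true_eq_false,
        false_and, or_false]
      rintro rfl
      exact he j hfP
    · rw [Function.update_of_ne hj]
      obtain rfl : j = !i := by cases i <;> cases j <;> simp_all
      exact disjoint_left.mp (hP.disjoint i) hfP

lemma IsForestPair.of_exchangeable (hP₀ : IsForestPair s t P₀) (h : Exchangeable s t P₀ P) :
    IsForestPair s t P ∧ size P = size P₀ := by
  induction h with
  | refl => exact ⟨hP₀, rfl⟩
  | tail _ hstep ih =>
    obtain ⟨i, e, f, he, hf, rfl⟩ := hstep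
    obtain ⟨h1, h2, -⟩ := ih.1.exchange he hf
    exact ⟨h1, h2.trans ih.2⟩

variable (s t) in
def IsMaxForestPair (P₀ : Bool → Finset E) : Prop :=
  IsForestPair s t P₀ ∧ ∀ P, IsForestPair s t P → size P ≤ size P₀

lemma reachable_of_isFree (hP₀ : IsMaxForestPair s t P₀) (h : Exchangeable s t P₀ P)
    (he : IsFree P e) (i : Bool) : Reachable s t (P i) (s e) (t e) := by
  by_contra hne
  obtain ⟨hP, hsize⟩ := hP₀.1.of_exchangeable h
  have hbig := hP₀.2 _ (hP.update ((hP.1 i).insert_of_not_reachable hne)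
    (disjoint_insert_left.mpr ⟨he _, hP.disjoint i⟩))
  have := size_update P i (insert e (P i))
  rw [card_insert_of_notMem (he i)] at this
  omega

variable [Fintype E]

lemma reachable_inter_freeable (hP₀ : IsMaxForestPair s t P₀) (h : Exchangeable s t P₀ P)
    (he : IsFree P e) (i : Bool) : Reachable s t (P i ∩ freeable s t P₀) (s e) (t e) := by
  have hP := (hP₀.1.of_exchangeable h).1
  refine ((hP.1 i).reachable_bridges (reachable_of_isFree hP₀ h he i)).mono fun f hf => ?_
  exact mem_inter.mpr ⟨mem_of_mem_filter _ hf,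
    mem_freeable (h.tail ⟨i, e, f, he, hf, rfl⟩) (hP.exchange he hf).2.2⟩

/-- The edge `f` swapped out by an exchange is itself free-able, so it stays reachable through
the free-able edges of the new forest. -/
lemma reachable_inter_freeable_iff (hP₀ : IsMaxForestPair s t P₀) (h : Exchangeable s t P₀ P) :
    Reachable s t (P j ∩ freeable s t P₀) x y ↔ Reachable s t (P₀ j ∩ freeable s t P₀) x y := by
  induction h generalizing x y with
  | refl => rfl
  | @tail P P' h hstep ih =>
    rw [← ih]
    obtain ⟨i, e, f, he, hf, rfl⟩ := hstep
    by_cases hj : j = i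
    swap
    · rw [Function.update_of_ne hj]
    subst hj
    have hP := (hP₀.1.of_exchangeable h).1
    have hfP : f ∈ P j := mem_of_mem_filter _ hf
    have h' : Exchangeable s t P₀ (Function.update P j (insert e ((P j).erase f))) :=
      h.tail ⟨j, e, f, he, hf, rfl⟩
    rw [Function.update_self]
    constructor
    · refine Reachable.of_forall_mem fun g hg => ?_
      obtain ⟨hg, hgA⟩ := mem_inter.mp hg
      rcases mem_insert.mp hg with rfl | hg
      · exact reachable_inter_freeable hP₀ h he j
      · exact reachable_of_mem (mem_inter.mpr ⟨mem_of_mem_erase hg, hgA⟩)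
    · refine Reachable.of_forall_mem fun g hg => ?_
      obtain ⟨hg, hgA⟩ := mem_inter.mp hg
      by_cases hgf : g = f
      · subst hgf
        simpa using reachable_inter_freeable hP₀ h' (hP.exchange he hf).2.2 j
      · exact reachable_of_mem (mem_inter.mpr ⟨mem_insert_of_mem (mem_erase.mpr ⟨hgf, hg⟩), hgA⟩)

lemma reachable_freeable_iff (hP₀ : IsMaxForestPair s t P₀) (j : Bool) :
    Reachable s t (freeable s t P₀) x y ↔ Reachable s t (P₀ j ∩ freeable s t P₀) x y := by
  refine ⟨Reachable.of_forall_mem fun e he => ?_, (·.mono inter_subset_right)⟩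
  obtain ⟨P, h, hfree⟩ := (mem_filter.mp he).2
  exact (reachable_inter_freeable_iff hP₀ h).mp (reachable_inter_freeable hP₀ h hfree j)

/-- Let `A` be the free-able edges. Both `P₀ j ∩ A` are spanning forests of the components of
`A`, and every edge leaving these components lies in `P₀ true \ A` or `P₀ false \ A`; by double
counting there are at least twice as many such edges as components, which leaves no room for a
forest `P₀ i` with two components. -/
lemma IsMaxForestPair.numComponents_le_one (hP₀ : IsMaxForestPair s t P₀)
    (hcut : ∀ Y : Finset Q, Y.Nonempty → Y ≠ univ → 4 ≤ #(cut s t Y)) (i : Bool) :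
    numComponents s t (P₀ i) ≤ 1 := by
  by_contra! hi
  have : Nonempty Q := by
    by_contra! hQ
    simp [numComponents, components, univ_eq_empty] at hi
  set A := freeable s t P₀
  have hsdiff : ∀ j, #(P₀ j \ A) + 1 ≤ numComponents s t A := fun j => by
    have hforest : IsForest s t (P₀ j ∩ A) := (hP₀.1.1 j).anti inter_subset_left
    rw [IsForest, ← numComponents_congr fun x y => reachable_freeable_iff hP₀ j] at hforest
    change #(P₀ j ∩ A) + numComponents s t A = _ at hforest
    have hj : #(P₀ j) + numComponents s t (P₀ j) = Fintype.card Q := hP₀.1.1 j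
    have := one_le_numComponents (s := s) (t := t) (P₀ j)
    have := card_inter_add_card_sdiff (P₀ j) A
    omega
  have hcomp : numComponents s t (P₀ i) ≤ numComponents s t A :=
    numComponents_le_of_reachable_imp fun x y h =>
      ((reachable_freeable_iff hP₀ i).mp h).mono inter_subset_left
  have hcross : (univ.filter fun e => ¬ Reachable s t A (s e) (t e)) ⊆
      (P₀ true \ A) ∪ (P₀ false \ A) := by
    intro e he
    have heA : e ∉ A := fun h => (mem_filter.mp he).2 (reachable_of_mem h)
    have : e ∈ P₀ true ∨ e ∈ P₀ false := by
      by_contra! h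
      exact heA (mem_freeable .refl fun j => by cases j <;> simp [h])
    simp only [mem_union, mem_sdiff]
    tauto
  have hle := (card_le_card hcross).trans (card_union_le _ _)
  have := two_mul_numComponents_le hcut (hi.trans_le hcomp)
  have := hsdiff true
  have := hsdiff false
  omega

variable (s t) in
lemma exists_isMaxForestPair : ∃ P₀, IsMaxForestPair s t P₀ := by
  obtain ⟨P₀, hP₀, hmax⟩ := exists_max_image (univ.filter (IsForestPair s t)) size
    ⟨fun _ => ∅, mem_filter.mpr ⟨mem_univ _, fun _ => isForest_empty, disjoint_empty_left _⟩⟩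
  exact ⟨P₀, (mem_filter.mp hP₀).2, fun P hP => hmax P (mem_filter.mpr ⟨mem_univ _, hP⟩)⟩

variable (s t) in
theorem exists_disjoint_spanning
    (hcut : ∀ Y : Finset Q, Y.Nonempty → Y ≠ univ → 4 ≤ #(cut s t Y)) :
    ∃ S₁ S₂ : Finset E, Disjoint S₁ S₂ ∧
      (∀ a b, Reachable s t S₁ a b) ∧ ∀ a b, Reachable s t S₂ a b := by
  obtain ⟨P₀, hP₀⟩ := exists_isMaxForestPair s t
  exact ⟨P₀ true, P₀ false, hP₀.1.2,
    reachable_of_numComponents_le_one (hP₀.numComponents_le_one hcut true),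
    reachable_of_numComponents_le_one (hP₀.numComponents_le_one hcut false)⟩

end TwoForests

section Flows

def IsSignedLift (x : E → ZMod 2) (g : E → ℤ) : Prop := ∀ e, (g e = 0 ↔ x e = 0) ∧ |g e| ≤ 1

lemma IsSignedLift.add_single {x : E → ZMod 2} {g : E → ℤ}
    (hg : IsSignedLift (x + Pi.single e 1) g) (hxe : x e ≠ 0) {σ : ℤ} (hσ : |σ| = 1) :
    IsSignedLift x (g + Pi.single e σ) := by
  intro f
  by_cases hfe : f = e
  · subst hfe
    have hge : g f = 0 := (hg f).1.mpr (by simpa using ZMod.add_one_eq_zero_of_ne_zero hxe)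
    simp [hge, hσ, hxe, ← abs_ne_zero]
  · simpa [hfe] using hg f

variable [Fintype E]

variable (s t) in
/-- The mod-`2` boundary of the edge set with indicator `x`. -/
noncomputable def boundary : (E → ZMod 2) →ₗ[ZMod 2] Q → ZMod 2 :=
  Fintype.linearCombination (ZMod 2) fun e => Pi.single (s e) 1 + Pi.single (t e) 1

lemma boundary_single (e : E) :
    boundary s t (Pi.single e 1) = Pi.single (s e) 1 + Pi.single (t e) 1 := by
  simp [boundary]

lemma pi_single_add_self (a : Q) : (Pi.single a 1 : Q → ZMod 2) + Pi.single a 1 = 0 := by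
  rw [← Pi.single_add, CharTwo.add_self_eq_zero, Pi.single_zero]

lemma sum_boundary [Fintype Q] (x : E → ZMod 2) : ∑ q, boundary s t x q = 0 := by
  simp [boundary, Fintype.linearCombination_apply, Finset.sum_apply, sum_comm (γ := Q),
    sum_add_distrib, ← mul_sum, ← mul_add, CharTwo.add_self_eq_zero]

lemma exists_boundary_eq_of_reachable (h : Reachable s t S a b) :
    ∃ x : E → ZMod 2, (∀ e ∉ S, x e = 0) ∧ boundary s t x = Pi.single a 1 + Pi.single b 1 := by
  induction h with
  | refl => exact ⟨0, fun _ _ => rfl, by rw [map_zero, pi_single_add_self]⟩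
  | @tail b c _ hbc ih =>
    obtain ⟨x, hxS, hx⟩ := ih
    obtain ⟨e, he, hends⟩ := hbc
    refine ⟨x + Pi.single e 1, fun f hf => ?_, ?_⟩
    · rw [Pi.add_apply, hxS f hf, Pi.single_eq_of_ne (ne_of_mem_of_not_mem he hf).symm, add_zero]
    · rw [map_add, hx, boundary_single]
      rcases hends with ⟨rfl, rfl⟩ | ⟨rfl, rfl⟩
      · linear_combination pi_single_add_self (s e)
      · linear_combination pi_single_add_self (t e)

/-- Existence of `T`-joins inside a connected `S`. -/
lemma exists_boundary_eq [Fintype Q] (hS : ∀ a b, Reachable s t S a b) (w : Q → ZMod 2)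
    (hw : ∑ q, w q = 0) : ∃ x : E → ZMod 2, (∀ e ∉ S, x e = 0) ∧ boundary s t x = w := by
  cases isEmpty_or_nonempty Q with
  | inl => exact ⟨0, fun _ _ => rfl, Subsingleton.elim _ _⟩
  | inr hQ =>
    -- join a fixed root `r` to every vertex `q` of odd weight
    let r := Classical.arbitrary Q
    choose x hxS hx using fun q => exists_boundary_eq_of_reachable (hS r q)
    refine ⟨∑ q, w q • x q, fun e he => by simp [hxS _ e he], ?_⟩
    simp_rw [map_sum, map_smul, hx, smul_add, sum_add_distrib, ← sum_smul, hw, zero_smul,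
      zero_add]
    simp_rw [← Pi.single_smul, smul_eq_mul, mul_one]
    exact univ_sum_single w

variable (s t) in
/-- The net flow of `g` out of each vertex, the edge `e` pointing from `s e` to `t e`. -/
noncomputable def netFlow : (E → ℤ) →ₗ[ℤ] Q → ℤ :=
  Fintype.linearCombination ℤ fun e => Pi.single (s e) 1 - Pi.single (t e) 1

lemma netFlow_single (e : E) (v : ℤ) :
    netFlow s t (Pi.single e v) = v • (Pi.single (s e) 1 - Pi.single (t e) 1) := by
  simp [netFlow]

lemma card_support_add_single_lt {x : E → ZMod 2} (hxe : x e ≠ 0) :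
    #(univ.filter fun f => (x + Pi.single e 1 : E → ZMod 2) f ≠ 0) <
      #(univ.filter fun f => x f ≠ 0) := by
  have : (univ.filter fun f => (x + Pi.single e 1 : E → ZMod 2) f ≠ 0) =
      (univ.filter fun f => x f ≠ 0).erase e := by
    ext f
    by_cases hfe : f = e
    · subst hfe; simp [ZMod.add_one_eq_zero_of_ne_zero hxe]
    · simp [hfe]
  rw [this]
  exact card_erase_lt_of_mem (by simpa using hxe)

lemma boundary_apply_eq_zero {x : E → ZMod 2} (h : ∀ e, x e ≠ 0 → s e ≠ a ∧ t e ≠ a) :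
    boundary s t x a = 0 := by
  simp only [boundary, Fintype.linearCombination_apply, Finset.sum_apply]
  refine sum_eq_zero fun e _ => ?_
  by_cases hxe : x e = 0
  · simp [hxe]
  · simp [Ne.symm (h e hxe).1, Ne.symm (h e hxe).2]

/-- A mod-`2` chain with boundary `{a, b}` lifts to a `±1`-valued flow from `a` to `b`: peel off
an edge at `a` and recurse from its other end. -/
lemma exists_flow_of_boundary_eq (x : E → ZMod 2) (a b : Q)
    (hx : boundary s t x = Pi.single a 1 + Pi.single b 1) :
    ∃ g, IsSignedLift x g ∧ netFlow s t g = Pi.single a 1 - Pi.single b 1 := by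
  induction hn : #(univ.filter fun e => x e ≠ 0) using Nat.strong_induction_on
    generalizing x a b with
  | _ n ih =>
  -- `e` is traversed from `a` to its other end `c` in the direction `σ`
  have peel : ∀ a b c e (σ : ℤ), x e ≠ 0 → |σ| = 1 →
      Pi.single (s e) 1 + Pi.single (t e) 1 = (Pi.single a 1 + Pi.single c 1 : Q → ZMod 2) →
      σ • (Pi.single (s e) 1 - Pi.single (t e) 1) = (Pi.single a 1 - Pi.single c 1 : Q → ℤ) →
      boundary s t x = Pi.single a 1 + Pi.single b 1 →
      ∃ g, IsSignedLift x g ∧ netFlow s t g = Pi.single a 1 - Pi.single b 1 := by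
    intro a b c e σ hxe hσ hends hflow hx
    have hx' : boundary s t (x + Pi.single e 1) = Pi.single c 1 + Pi.single b 1 := by
      rw [map_add, hx, boundary_single, hends]
      linear_combination pi_single_add_self a
    obtain ⟨g, hg, hgflow⟩ := ih _ (hn ▸ card_support_add_single_lt hxe) _ c b hx' rfl
    refine ⟨g + Pi.single e σ, hg.add_single hxe hσ, ?_⟩
    rw [map_add, hgflow, netFlow_single, hflow]
    abel
  by_cases ha : ∃ e, x e ≠ 0 ∧ (s e = a ∨ t e = a)
  · obtain ⟨e, hxe, rfl | rfl⟩ := ha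
    · exact peel _ b (t e) e 1 hxe (by simp) rfl (by simp) hx
    · exact peel _ b (s e) e (-1) hxe (by simp) (add_comm _ _) (by simp) hx
  push Not at ha
  obtain rfl : a = b := by
    by_contra hab
    simpa [hx, hab] using boundary_apply_eq_zero ha
  by_cases hx0 : x = 0
  · exact ⟨0, by simp [IsSignedLift, hx0], by simp⟩
  obtain ⟨e, hxe⟩ : ∃ e, x e ≠ 0 := by
    by_contra! h
    exact hx0 (funext h)
  rw [sub_self]
  simpa using peel (s e) (s e) (t e) e 1 hxe (by simp) rfl (by simp)
    (by rw [hx, pi_single_add_self, pi_single_add_self])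

lemma exists_circulation_of_spanning [Fintype Q] (hS : ∀ a b, Reachable s t S a b) :
    ∃ g : E → ℤ, netFlow s t g = 0 ∧ ∀ e, |g e| ≤ 1 ∧ (e ∉ S → g e ≠ 0) := by
  -- `c` marks the edges off `S`, and `y ⊆ S` corrects the parity of its degrees
  let c : E → ZMod 2 := fun e => if e ∈ S then 0 else 1
  obtain ⟨y, hyS, hy⟩ := exists_boundary_eq hS (boundary s t c) (sum_boundary c)
  have hcy : boundary s t (c + y) = 0 := by
    rw [map_add, hy]
    exact funext fun q => CharTwo.add_self_eq_zero _
  cases isEmpty_or_nonempty Q with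
  | inl => exact ⟨0, Subsingleton.elim _ _, fun e => isEmptyElim (s e)⟩
  | inr hQ =>
    let a := Classical.arbitrary Q
    obtain ⟨g, hg, hgflow⟩ := exists_flow_of_boundary_eq (c + y) a a
      (by rw [hcy, pi_single_add_self])
    refine ⟨g, by rw [hgflow, sub_self], fun e => ⟨(hg e).2, fun he h => ?_⟩⟩
    simpa [c, he, hyS e he] using (hg e).1.mp h

lemma sum_outEdges_eq {g : E → ℤ} (hg : netFlow s t g = 0) (Y : Finset Q) :
    ∑ e ∈ outEdges s t Y, g e = ∑ e ∈ outEdges t s Y, g e := by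
  have h : ∑ q ∈ Y, netFlow s t g q =
      ∑ e, g e * ((if s e ∈ Y then 1 else 0) - (if t e ∈ Y then 1 else 0)) := by
    simp [netFlow, Fintype.linearCombination_apply, Finset.sum_apply, sum_comm (γ := Q),
      ← mul_sum, sum_sub_distrib]
  rw [hg] at h
  simp only [Pi.zero_apply, sum_const_zero] at h
  rw [outEdges, outEdges, sum_filter, sum_filter, ← sub_eq_zero, ← sum_sub_distrib]
  refine (sum_congr rfl fun e _ => ?_).trans h.symm
  by_cases hs : s e ∈ Y <;> by_cases ht : t e ∈ Y <;> simp [hs, ht]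

end Flows

/-- The finite case of the theorem (Jaeger): with edge-disjoint connected spanning `S₁, S₂`,
take `±1`-circulations `g₁, g₂` nonzero off `S₁`, resp. off `S₂`; then `g₁ + 2 g₂` is a
nowhere-zero `4`-flow. -/
theorem exists_fourFlow [Fintype Q] [Fintype E]
    (hcut : ∀ Y : Finset Q, Y.Nonempty → Y ≠ univ → 4 ≤ #(cut s t Y)) :
    ∃ g : E → ℤ, netFlow s t g = 0 ∧ ∀ e, g e ≠ 0 ∧ |g e| < 4 := by
  obtain ⟨S₁, S₂, hdisj, h₁, h₂⟩ := exists_disjoint_spanning s t hcut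
  obtain ⟨g₁, hg₁, hb₁⟩ := exists_circulation_of_spanning h₁
  obtain ⟨g₂, hg₂, hb₂⟩ := exists_circulation_of_spanning h₂
  refine ⟨g₁ + 2 • g₂, by rw [map_add, map_nsmul, hg₁, hg₂, smul_zero, add_zero], fun e => ?_⟩
  have he : e ∉ S₁ ∨ e ∉ S₂ := by
    by_contra! h
    exact disjoint_left.mp hdisj h.1 h.2
  obtain ⟨hb₁, hz₁⟩ := hb₁ e
  obtain ⟨hb₂, hz₂⟩ := hb₂ e
  rw [abs_le] at hb₁ hb₂
  rw [show (g₁ + 2 • g₂) e = g₁ e + 2 * g₂ e by simp [two_mul], abs_lt]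
  rcases he with he | he
  · have := hz₁ he; omega
  · have := hz₂ he; omega

end FinMultigraph

namespace FourFlow

open FinMultigraph

variable {V : Type*} (G : SimpleGraph V)

/-- The edges of `G`, each oriented along a fixed well-order of `V`. -/
def forwardPairs : Set (V × V) := {p | G.Adj p.1 p.2 ∧ WellOrderingRel p.1 p.2}

abbrev Weight : Type := {z : ℤ // z ≠ 0 ∧ |z| < 4}

instance : Finite Weight :=
  ((Set.finite_Ioo (-4 : ℤ) 4).subset fun _ hz => abs_lt.mp hz.2).to_subtype

variable {G}

open scoped Classical in
noncomputable def extend (ω : forwardPairs G → Weight) (x y : V) : ℤ :=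
  if h : (x, y) ∈ forwardPairs G then ω ⟨_, h⟩
  else if h : (y, x) ∈ forwardPairs G then -ω ⟨_, h⟩ else 0

lemma extend_swap (ω : forwardPairs G → Weight) (x y : V) : extend ω y x = -extend ω x y := by
  unfold extend
  by_cases hxy : (x, y) ∈ forwardPairs G <;> by_cases hyx : (y, x) ∈ forwardPairs G
  · exact absurd hyx.2 (asymm hxy.2)
  all_goals simp [hxy, hyx]

lemma extend_of_adj (ω : forwardPairs G → Weight) {x y : V} (h : G.Adj x y) :
    extend ω x y ≠ 0 ∧ |extend ω x y| < 4 := by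
  rcases trichotomous_of WellOrderingRel x y with hxy | rfl | hyx
  · simpa [extend, forwardPairs, h, hxy] using (ω ⟨(x, y), h, hxy⟩).2
  · exact absurd h (G.irrefl)
  · rw [← neg_neg (extend ω x y), ← extend_swap, neg_ne_zero, abs_neg]
    simpa [extend, forwardPairs, h.symm, hyx] using (ω ⟨(y, x), h.symm, hyx⟩).2

lemma continuous_extend (x y : V) :
    Continuous fun ω : forwardPairs G → Weight => extend ω x y := by
  unfold extend
  split_ifs <;> fun_prop

variable (G) in
def balancedOn (X : Set V) : Set (forwardPairs G → Weight) :=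
  {ω | (orientedCut G X).Finite → ∑ᶠ p ∈ orientedCut G X, extend ω p.1 p.2 = 0}

lemma isClosed_balancedOn (X : Set V) : IsClosed (balancedOn G X) := by
  by_cases hX : (orientedCut G X).Finite
  · have : balancedOn G X = {ω | ∑ p ∈ hX.toFinset, extend ω p.1 p.2 = 0} := by
      ext ω
      simp [balancedOn, hX, finsum_mem_eq_finite_toFinset_sum _ hX]
    rw [this]
    exact isClosed_eq (continuous_finsetSum _ fun p _ => continuous_extend p.1 p.2)
      continuous_const
  · simp [balancedOn, hX]

section Contraction

variable (𝒞 : Finset (Set V))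

/-- Contracting `G` onto the atoms of the Boolean algebra generated by `𝒞`: a vertex is sent to
the sets of `𝒞` containing it. -/
def sides (v : V) : 𝒞 → Prop := fun X => v ∈ X.1

abbrev ContractedVertex : Type _ := Set.range (sides 𝒞)

noncomputable def toContracted : V → ContractedVertex 𝒞 := Set.rangeFactorization (sides 𝒞)

variable (G) in
abbrev ContractedEdge : Type _ :=
  {p : forwardPairs G // toContracted 𝒞 p.1.1 ≠ toContracted 𝒞 p.1.2}

variable {𝒞}

noncomputable def ContractedEdge.source (e : ContractedEdge G 𝒞) : ContractedVertex 𝒞 :=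
  toContracted 𝒞 e.1.1.1

noncomputable def ContractedEdge.target (e : ContractedEdge G 𝒞) : ContractedVertex 𝒞 :=
  toContracted 𝒞 e.1.1.2

lemma toContracted_eq_iff {x y : V} :
    toContracted 𝒞 x = toContracted 𝒞 y ↔ ∀ X ∈ 𝒞, (x ∈ X ↔ y ∈ X) := by
  simp [toContracted, Set.rangeFactorization, sides, funext_iff]

lemma toContracted_ne_of_mem_orientedCut {X : Set V} (hX : X ∈ 𝒞) {p : V × V}
    (hp : p ∈ orientedCut G X) : toContracted 𝒞 p.1 ≠ toContracted 𝒞 p.2 := fun h =>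
  hp.2.2 ((toContracted_eq_iff.mp h X hX).mp hp.2.1)

lemma finite_contractedEdge (h𝒞 : ∀ X ∈ 𝒞, (orientedCut G X).Finite) :
    Finite (ContractedEdge G 𝒞) := by
  have hfin := (𝒞.finite_toSet.biUnion fun X hX =>
    (h𝒞 X hX).union ((h𝒞 X hX).preimage Prod.swap_injective.injOn)).to_subtype
  refine Finite.of_injective (fun e => (⟨e.1.1, ?_⟩ : ↥(⋃ X ∈ (𝒞 : Set (Set V)),
    orientedCut G X ∪ Prod.swap ⁻¹' orientedCut G X))) fun e e' h => ?_
  · obtain ⟨X, hX, hne⟩ : ∃ X ∈ 𝒞, ¬ (e.1.1.1 ∈ X ↔ e.1.1.2 ∈ X) := by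
      simpa [toContracted_eq_iff] using e.2
    refine Set.mem_biUnion hX ?_
    by_cases h1 : e.1.1.1 ∈ X
    · exact Or.inl ⟨e.1.2.1, h1, fun h2 => hne (iff_of_true h1 h2)⟩
    · exact Or.inr ⟨e.1.2.1.symm, by tauto, h1⟩
  · exact Subtype.ext (Subtype.ext (congrArg Subtype.val h :))

lemma four_le_card_cut [Fintype (ContractedVertex 𝒞)] [Fintype (ContractedEdge G 𝒞)]
    (hconn : ∀ X : Set V, X.Nonempty → Xᶜ.Nonempty →
      (edgeCut G X).Infinite ∨ 4 ≤ (edgeCut G X).ncard)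
    (Y : Finset (ContractedVertex 𝒞)) (hY : Y.Nonempty) (hYu : Y ≠ univ) :
    4 ≤ #(cut (E := ContractedEdge G 𝒞) ContractedEdge.source ContractedEdge.target Y) := by
  set X := toContracted 𝒞 ⁻¹' (Y : Set (ContractedVertex 𝒞))
  have hsurj : Function.Surjective (toContracted 𝒞) := Set.rangeFactorization_surjective
  have hX : X.Nonempty := by
    obtain ⟨q, hq⟩ := hY
    obtain ⟨v, rfl⟩ := hsurj q
    exact ⟨v, hq⟩
  have hXc : Xᶜ.Nonempty := by
    obtain ⟨q, hq⟩ := not_forall.mp fun h => hYu (eq_univ_of_forall h)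
    obtain ⟨v, rfl⟩ := hsurj q
    exact ⟨v, hq⟩
  have hsub : edgeCut G X ⊆ (fun e : ContractedEdge G 𝒞 => s(e.1.1.1, e.1.1.2)) ''
      ↑(cut (E := ContractedEdge G 𝒞) ContractedEdge.source ContractedEdge.target Y) := by
    rintro _ ⟨x, y, hxy, hx, hy, rfl⟩
    have hne : toContracted 𝒞 x ≠ toContracted 𝒞 y := fun h => hy (by simpa [X, h] using hx)
    have hx' : toContracted 𝒞 x ∈ Y := hx
    have hy' : toContracted 𝒞 y ∉ Y := hy
    rcases trichotomous_of WellOrderingRel x y with h | rfl | h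
    · refine ⟨⟨⟨(x, y), hxy, h⟩, hne⟩, ?_, rfl⟩
      exact mem_cut.mpr (Or.inl ⟨hx', hy'⟩)
    · exact absurd hxy G.irrefl
    · refine ⟨⟨⟨(y, x), hxy.symm, h⟩, hne.symm⟩, ?_, Sym2.eq_swap⟩
      exact mem_cut.mpr (Or.inr ⟨hx', hy'⟩)
  have hfin : (edgeCut G X).Finite := ((Set.toFinite _).image _).subset hsub
  calc 4 ≤ (edgeCut G X).ncard := (hconn X hX hXc).resolve_left (not_not.mpr hfin)
    _ ≤ _ := Set.ncard_le_ncard hsub ((Set.toFinite _).image _)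
    _ ≤ _ := Set.ncard_image_le (Set.toFinite _)
    _ = _ := Set.ncard_coe_finset _

/-- Pairs inside a contracted vertex get weight `1`; they cross none of the cuts of `𝒞`. -/
noncomputable def liftFlow (g : ContractedEdge G 𝒞 → ℤ) (hg : ∀ e, g e ≠ 0 ∧ |g e| < 4) :
    forwardPairs G → Weight := fun p =>
  if h : toContracted 𝒞 p.1.1 ≠ toContracted 𝒞 p.1.2 then ⟨g ⟨p, h⟩, hg _⟩ else ⟨1, by norm_num⟩

lemma extend_liftFlow {g : ContractedEdge G 𝒞 → ℤ} (hg : ∀ e, g e ≠ 0 ∧ |g e| < 4)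
    (e : ContractedEdge G 𝒞) : extend (liftFlow g hg) e.1.1.1 e.1.1.2 = g e := by
  simp [extend, e.1.2, liftFlow, e.2]

section

variable [Fintype (ContractedVertex 𝒞)] [Fintype (ContractedEdge G 𝒞)] {X : Set V}

open scoped Classical in
noncomputable def contractedSide (hX : X ∈ 𝒞) : Finset (ContractedVertex 𝒞) :=
  univ.filter fun q => q.1 ⟨X, hX⟩

lemma toContracted_mem_contractedSide (hX : X ∈ 𝒞) {v : V} :
    toContracted 𝒞 v ∈ contractedSide hX ↔ v ∈ X := by
  simp [contractedSide, toContracted, Set.rangeFactorization, sides]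

open scoped Classical in
lemma orientedCut_eq_union_image (hX : X ∈ 𝒞) : orientedCut G X =
    ↑((outEdges ContractedEdge.source ContractedEdge.target (contractedSide hX)).image
        (fun e : ContractedEdge G 𝒞 => e.1.1) ∪
      (outEdges ContractedEdge.target ContractedEdge.source (contractedSide hX)).image
        (fun e : ContractedEdge G 𝒞 => e.1.1.swap)) := by
  ext p
  simp only [coe_union, coe_image, Set.mem_union, Set.mem_image, mem_coe, mem_outEdges,
    ContractedEdge.source, ContractedEdge.target, toContracted_mem_contractedSide]
  constructor
  · intro hp
    have hne := toContracted_ne_of_mem_orientedCut hX hp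
    obtain ⟨hxy, hx, hy⟩ := hp
    rcases trichotomous_of WellOrderingRel p.1 p.2 with h | h | h
    · exact Or.inl ⟨⟨⟨p, hxy, h⟩, hne⟩, ⟨hx, hy⟩, rfl⟩
    · exact absurd (h ▸ hxy) G.irrefl
    · exact Or.inr ⟨⟨⟨p.swap, hxy.symm, h⟩, hne.symm⟩, ⟨hx, hy⟩, rfl⟩
  · rintro (⟨e, ⟨hx, hy⟩, rfl⟩ | ⟨e, ⟨hx, hy⟩, rfl⟩)
    · exact ⟨e.1.2.1, hx, hy⟩
    · exact ⟨e.1.2.1.symm, hx, hy⟩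

open scoped Classical in
lemma finsum_orientedCut_liftFlow (hX : X ∈ 𝒞) {g : ContractedEdge G 𝒞 → ℤ}
    (hg : ∀ e, g e ≠ 0 ∧ |g e| < 4)
    (hflow : netFlow ContractedEdge.source ContractedEdge.target g = 0) :
    ∑ᶠ p ∈ orientedCut G X, extend (liftFlow g hg) p.1 p.2 = 0 := by
  have hdisj : Disjoint
      ((outEdges ContractedEdge.source ContractedEdge.target (contractedSide hX)).image
        (fun e : ContractedEdge G 𝒞 => e.1.1))
      ((outEdges ContractedEdge.target ContractedEdge.source (contractedSide hX)).image
        (fun e : ContractedEdge G 𝒞 => e.1.1.swap)) := by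
    simp only [disjoint_left, mem_image]
    rintro _ ⟨e, -, rfl⟩ ⟨e', -, he'⟩
    have h := e.1.2.2
    rw [← he'] at h
    exact asymm h e'.1.2.2
  rw [orientedCut_eq_union_image hX, finsum_mem_coe_finset, sum_union hdisj, sum_image,
    sum_image]
  · simp_rw [Prod.fst_swap, Prod.snd_swap, extend_swap _ (Prod.fst _), extend_liftFlow,
      sum_neg_distrib]
    rw [sum_outEdges_eq hflow, add_neg_cancel]
  · intro e _ e' _ h
    exact Subtype.ext (Subtype.ext (Prod.swap_injective h))
  · intro e _ e' _ h
    exact Subtype.ext (Subtype.ext h)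

end

lemma exists_balanced (hconn : ∀ X : Set V, X.Nonempty → Xᶜ.Nonempty →
      (edgeCut G X).Infinite ∨ 4 ≤ (edgeCut G X).ncard)
    (h𝒞 : ∀ X ∈ 𝒞, (orientedCut G X).Finite) :
    ∃ ω : forwardPairs G → Weight, ∀ X ∈ 𝒞, ∑ᶠ p ∈ orientedCut G X, extend ω p.1 p.2 = 0 := by
  have := finite_contractedEdge h𝒞
  let := Fintype.ofFinite (ContractedVertex 𝒞)
  let := Fintype.ofFinite (ContractedEdge G 𝒞)
  obtain ⟨g, hflow, hg⟩ := exists_fourFlow (four_le_card_cut (𝒞 := 𝒞) hconn)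
  exact ⟨liftFlow g hg, fun X hX => finsum_orientedCut_liftFlow hX hg hflow⟩

end Contraction

open scoped Classical in
lemma nonempty_biInter_balancedOn (hconn : ∀ X : Set V, X.Nonempty → Xᶜ.Nonempty →
      (edgeCut G X).Infinite ∨ 4 ≤ (edgeCut G X).ncard) (T : Finset (Set V)) :
    (⋂ X ∈ T, balancedOn G X).Nonempty := by
  obtain ⟨ω, hω⟩ := exists_balanced hconn (𝒞 := T.filter fun X => (orientedCut G X).Finite)
    fun X hX => (mem_filter.mp hX).2
  exact ⟨ω, Set.mem_iInter₂.mpr fun X hX hfin => hω X (mem_filter.mpr ⟨hX, hfin⟩)⟩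

end FourFlow

/-- Every (possibly infinite) `4`-edge-connected graph (every cut induced by a
nonempty proper vertex set has at least `4` edges) has a `4`-flow: an antisymmetric
map to `{-3,…,-1,1,…,3} ⊆ ℤ` summing to zero over every finite oriented cut. -/
theorem stmt9 {V : Type*} (G : SimpleGraph V)
    (hconn : ∀ X : Set V, X.Nonempty → Xᶜ.Nonempty →
      (edgeCut G X).Infinite ∨ 4 ≤ (edgeCut G X).ncard) :
    ∃ f : V → V → ℤ,
      (∀ x y, G.Adj x y → f x y ≠ 0 ∧ |f x y| < 4) ∧
      (∀ x y : V, f y x = - f x y) ∧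
      (∀ X : Set V, (orientedCut G X).Finite →
        ∑ᶠ p ∈ orientedCut G X, f p.1 p.2 = 0) := by
  obtain ⟨ω, hω⟩ := CompactSpace.iInter_nonempty FourFlow.isClosed_balancedOn
    (FourFlow.nonempty_biInter_balancedOn hconn)
  exact ⟨FourFlow.extend ω, fun x y h => FourFlow.extend_of_adj ω h,
    fun x y => FourFlow.extend_swap ω x y, fun X hX => Set.mem_iInter.mp hω X hX⟩
end

section
/- If n-edge-connectivity implies the existence of an m-flow for all finite graphs, then every n-edge-connected infinite graph also has an m-flow. -/
open scoped Classical

/-- The edges of a multigraph (given by tail/head maps `tl hd : E → V`) crossing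
between `X` and its complement. -/
def multiCut {V E : Type*} (tl hd : E → V) (X : Set V) : Set E :=
  {e | (tl e ∈ X ∧ hd e ∉ X) ∨ (hd e ∈ X ∧ tl e ∉ X)}

/-- An `m`-flow on a multigraph: a nowhere-zero integer map with absolute values
less than `m`, whose signed sum over every finite cut is zero. -/
def IsMFlow {V E : Type*} (m : ℕ) (tl hd : E → V) (f : E → ℤ) : Prop :=
  (∀ e, f e ≠ 0 ∧ |f e| < (m : ℤ)) ∧
  ∀ X : Set V, (multiCut tl hd X).Finite →
    ∑ᶠ e ∈ multiCut tl hd X, (if tl e ∈ X then f e else - f e) = 0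

/-- `n`-edge-connectivity: every cut induced by a nonempty proper vertex set has at
least `n` edges. -/
def IsNEdgeConnected {V E : Type*} (n : ℕ) (tl hd : E → V) : Prop :=
  ∀ X : Set V, X.Nonempty → Xᶜ.Nonempty →
    (multiCut tl hd X).Infinite ∨ n ≤ (multiCut tl hd X).ncard

lemma flow_fip {V E : Type*} (n m : ℕ) (tl hd : E → V)
    (hfin : ∀ (W F : Type) (_ : Finite W) (_ : Finite F) (tl' hd' : F → W),
      IsNEdgeConnected n tl' hd' → ∃ f : F → ℤ, IsMFlow m tl' hd' f)
    (hconn : IsNEdgeConnected n tl hd) (hm : 2 ≤ m)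
    (t : Finset {X : Set V // (multiCut tl hd X).Finite}) :
    ∃ f : E → ℤ, (∀ e, f e ≠ 0 ∧ |f e| < (m : ℤ)) ∧
      ∀ i ∈ t, ∑ᶠ e ∈ multiCut tl hd i.1, (if tl e ∈ i.1 then f e else - f e) = 0 := by
  classical
  set φ : V → (↥t → Bool) := fun v i => decide (v ∈ i.1.1) with hφdef
  -- the finitely many "relevant" edges
  have hFsub : {e : E | φ (tl e) ≠ φ (hd e)}.Finite := by
    have hsub : {e : E | φ (tl e) ≠ φ (hd e)} ⊆ ⋃ i : ↥t, multiCut tl hd i.1.1 := by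
      intro e he
      obtain ⟨i, hi⟩ := Function.ne_iff.mp he
      refine Set.mem_iUnion.mpr ⟨i, ?_⟩
      by_cases h1 : tl e ∈ i.1.1 <;> by_cases h2 : hd e ∈ i.1.1 <;>
        simp [multiCut, hφdef, h1, h2] at hi ⊢
    exact Set.Finite.subset (Set.finite_iUnion (fun i => i.1.2)) hsub
  haveI : Finite ↥{e : E | φ (tl e) ≠ φ (hd e)} := hFsub.to_subtype
  haveI : Finite ↥(Set.range φ) := (Set.toFinite (Set.range φ)).to_subtype
  set φ' : V → ↥(Set.range φ) := fun v => ⟨φ v, Set.mem_range_self v⟩ with hφ'def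
  obtain ⟨k, ⟨eW⟩⟩ := Finite.exists_equiv_fin ↥(Set.range φ)
  obtain ⟨j, ⟨eF⟩⟩ := Finite.exists_equiv_fin ↥{e : E | φ (tl e) ≠ φ (hd e)}
  set ρ : Fin j → E := fun e₀ => (eF.symm e₀).1 with hρdef
  have hρinj : Function.Injective ρ :=
    Subtype.val_injective.comp eF.symm.injective
  set tl₀ : Fin j → Fin k := fun e₀ => eW (φ' (tl (ρ e₀))) with htl₀def
  set hd₀ : Fin j → Fin k := fun e₀ => eW (φ' (hd (ρ e₀))) with hhd₀def
  -- cut correspondence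
  have hcutpre : ∀ Y : Set (Fin k),
      multiCut tl₀ hd₀ Y = ρ ⁻¹' multiCut tl hd {v : V | eW (φ' v) ∈ Y} :=
    fun Y => rfl
  have hcutim : ∀ Y : Set (Fin k),
      multiCut tl hd {v : V | eW (φ' v) ∈ Y} = ρ '' multiCut tl₀ hd₀ Y := by
    intro Y
    rw [hcutpre, Set.image_preimage_eq_inter_range]
    refine (Set.inter_eq_left.mpr ?_).symm
    intro e he
    have hne : φ (tl e) ≠ φ (hd e) := by
      rcases he with ⟨h1, h2⟩ | ⟨h1, h2⟩ <;>
      · intro h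
        have : φ' (tl e) = φ' (hd e) := Subtype.ext h
        simp only [Set.mem_setOf_eq, this] at h1 h2
        exact h2 h1
    exact ⟨eF ⟨e, hne⟩, by simp [hρdef]⟩
  -- n-edge-connectivity of the contracted graph
  have hconn₀ : IsNEdgeConnected n tl₀ hd₀ := by
    intro Y hY hYc
    right
    set Z : Set V := {v : V | eW (φ' v) ∈ Y} with hZdef
    have hZne : Z.Nonempty := by
      obtain ⟨y, hy⟩ := hY
      obtain ⟨v, hv⟩ := (eW.symm y).2
      refine ⟨v, ?_⟩
      have : φ' v = eW.symm y := Subtype.ext hv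
      simp [hZdef, this, hy]
    have hZcne : Zᶜ.Nonempty := by
      obtain ⟨y, hy⟩ := hYc
      obtain ⟨v, hv⟩ := (eW.symm y).2
      refine ⟨v, ?_⟩
      have : φ' v = eW.symm y := Subtype.ext hv
      simp only [Set.mem_compl_iff, hZdef, Set.mem_setOf_eq, this, Equiv.apply_symm_apply]
      exact hy
    have hfin' : (multiCut tl hd Z).Finite := by
      rw [hcutim Y]
      exact Set.Finite.image _ (Set.toFinite _)
    rcases hconn Z hZne hZcne with h | h
    · exact absurd hfin' h
    · calc n ≤ (multiCut tl hd Z).ncard := h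
        _ = (multiCut tl₀ hd₀ Y).ncard := by
            rw [hcutim Y, Set.ncard_image_of_injective _ hρinj]
  obtain ⟨g₀, hg₀⟩ := hfin (Fin k) (Fin j) inferInstance inferInstance tl₀ hd₀ hconn₀
  refine ⟨fun e => if h : φ (tl e) ≠ φ (hd e) then g₀ (eF ⟨e, h⟩) else 1, ?_, ?_⟩
  · intro e
    by_cases h : φ (tl e) ≠ φ (hd e)
    · simp only [dif_pos h]
      exact hg₀.1 _
    · simp only [dif_neg h]
      constructor
      · norm_num
      · rw [abs_one]
        exact_mod_cast by omega
  · intro i hi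
    set Y : Set (Fin k) := {w₀ | (eW.symm w₀).1 ⟨i, hi⟩ = true} with hYdef
    have hZX : {v : V | eW (φ' v) ∈ Y} = i.1 := by
      ext v
      simp [hYdef, hφ'def, hφdef]
    have hcut : multiCut tl hd i.1 = ρ '' multiCut tl₀ hd₀ Y := by
      rw [← hZX]; exact hcutim Y
    rw [hcut, finsum_mem_image (Set.injOn_of_injective hρinj)]
    have := hg₀.2 Y (Set.toFinite _)
    rw [← this]
    apply finsum_mem_congr rfl
    intro e₀ he₀
    have hmem : ρ e₀ ∈ multiCut tl hd i.1 := by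
      rw [hcut]; exact ⟨e₀, he₀, rfl⟩
    have hiff : tl (ρ e₀) ∈ i.1 ↔ tl₀ e₀ ∈ Y := by
      rw [← hZX]; rfl
    have hval : (if h : φ (tl (ρ e₀)) ≠ φ (hd (ρ e₀)) then g₀ (eF ⟨ρ e₀, h⟩) else 1) = g₀ e₀ := by
      have hne : φ (tl (ρ e₀)) ≠ φ (hd (ρ e₀)) := (eF.symm e₀).2
      rw [dif_pos hne]
      congr 1
      have : (⟨ρ e₀, hne⟩ : {e : E | φ (tl e) ≠ φ (hd e)}) = eF.symm e₀ := Subtype.ext rfl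
      rw [this, Equiv.apply_symm_apply]
    by_cases hc : tl (ρ e₀) ∈ i.1
    · rw [if_pos hc, if_pos (hiff.mp hc)]; exact hval
    · rw [if_neg hc, if_neg (fun h => hc (hiff.mpr h))]; exact congrArg Neg.neg hval

/-- If `n`-edge-connectivity implies the existence of an `m`-flow for all finite
graphs, then every `n`-edge-connected infinite graph also has an `m`-flow. -/
theorem stmt11 {V E : Type*} (n m : ℕ) (tl hd : E → V)
    (hfin : ∀ (W F : Type) (_ : Finite W) (_ : Finite F) (tl' hd' : F → W),
      IsNEdgeConnected n tl' hd' → ∃ f : F → ℤ, IsMFlow m tl' hd' f)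
    (hconn : IsNEdgeConnected n tl hd) :
    ∃ f : E → ℤ, IsMFlow m tl hd f := by
  classical
  -- Step 1: m ≥ 2, from a single-loop finite graph
  have hm : 2 ≤ m := by
    have hc : IsNEdgeConnected n (fun _ : Fin 1 => PUnit.unit) (fun _ => PUnit.unit) := by
      intro X hX hXc
      obtain ⟨x, hx⟩ := hX
      obtain ⟨y, hy⟩ := hXc
      exact absurd (show y ∈ X from (Subsingleton.elim x y) ▸ hx) hy
    obtain ⟨g, hg⟩ := hfin PUnit (Fin 1) inferInstance inferInstance _ _ hc
    obtain ⟨h1, h2⟩ := hg.1 0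
    have : (1 : ℤ) ≤ |g 0| := by
      rcases lt_or_ge (g 0) 0 with h | h
      · rw [abs_of_neg h]; omega
      · rw [abs_of_nonneg h]; omega
    have : (1 : ℤ) < (m : ℤ) := lt_of_le_of_lt this h2
    exact_mod_cast this
  -- Step 2: compactness
  set A := {a : ℤ // a ≠ 0 ∧ |a| < (m : ℤ)} with hAdef
  haveI : Finite A := by
    have h : {a : ℤ | a ≠ 0 ∧ |a| < (m : ℤ)}.Finite :=
      (Set.finite_Ioo (-(m : ℤ)) (m : ℤ)).subset (fun a ha => abs_lt.mp ha.2)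
    exact h.to_subtype
  haveI : Nonempty A := ⟨⟨1, one_ne_zero, by rw [abs_one]; exact_mod_cast hm⟩⟩
  set ι := {X : Set V // (multiCut tl hd X).Finite} with hιdef
  set C : ι → Set (E → A) := fun i =>
    {g | ∑ e ∈ i.2.toFinset, (if tl e ∈ i.1 then (g e : ℤ) else -(g e : ℤ)) = 0} with hCdef
  have hclosed : ∀ i, IsClosed (C i) := by
    intro i
    have hcont : Continuous fun g : E → A =>
        ∑ e ∈ i.2.toFinset, (if tl e ∈ i.1 then (g e : ℤ) else -(g e : ℤ)) := by
      apply continuous_finset_sum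
      intro e _
      by_cases h : tl e ∈ i.1
      · simp only [if_pos h]
        exact continuous_subtype_val.comp (continuous_apply e)
      · simp only [if_neg h]
        exact (continuous_subtype_val.comp (continuous_apply e)).neg
    exact isClosed_singleton.preimage hcont
  have hnonempty : (⋂ i, C i).Nonempty := by
    by_contra hempty
    rw [Set.not_nonempty_iff_eq_empty] at hempty
    have huniv : (Set.univ : Set (E → A)) ∩ ⋂ i, C i = ∅ := by
      rw [hempty, Set.inter_empty]
    obtain ⟨t, ht⟩ := IsCompact.elim_finite_subfamily_closed isCompact_univ C hclosed huniv
    obtain ⟨f, hf1, hf2⟩ := flow_fip n m tl hd hfin hconn hm t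
    have hmem : (fun e => (⟨f e, hf1 e⟩ : A)) ∈ (Set.univ : Set (E → A)) ∩ ⋂ i ∈ t, C i := by
      refine ⟨Set.mem_univ _, Set.mem_iInter₂.mpr fun i hi => ?_⟩
      have := hf2 i hi
      rw [← Set.Finite.coe_toFinset i.2, finsum_mem_coe_finset] at this
      simpa [hCdef] using this
    rw [ht] at hmem
    exact hmem
  obtain ⟨g, hg⟩ := hnonempty
  refine ⟨fun e => (g e).1, fun e => (g e).2, ?_⟩
  intro X hX
  have hmem : g ∈ C ⟨X, hX⟩ := Set.mem_iInter.mp hg ⟨X, hX⟩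
  rw [← Set.Finite.coe_toFinset hX, finsum_mem_coe_finset]
  simpa [hCdef] using hmem
end

section
/- Let G be a graph and M a finite set of finite cuts of G, and let G_M be the multigraph obtained by contracting with respect to M. Then every cut in M is a cut of G_M, and every cut of G_M is a finite cut of G: M ⊆ B(G_M) ⊆ B_fin(G). -/
/-- A vertex set is `M`-saturated if it is a union of classes of the partition of `V`
induced by `M`, i.e. of vertex classes of the contracted multigraph `G_M`.  The cuts
of `G_M` are exactly the cuts of `G` induced by `M`-saturated vertex sets. -/
def Saturated {V : Type*} (M : Finset (Set V)) (X' : Set V) : Prop :=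
  ∀ v w : V, (∀ X ∈ M, (v ∈ X ↔ w ∈ X)) → (v ∈ X' ↔ w ∈ X')

/-- Let `M` be a finite set of finite cuts of `G` and `G_M` the multigraph obtained by
contracting with respect to `M` (its vertices are the classes of the partition induced
by `M`, its cuts the cuts of `G` induced by `M`-saturated vertex sets).  Then
`M ⊆ B(G_M) ⊆ B_fin(G)`: every cut in `M` is a cut of `G_M`, and every cut of `G_M`
is a finite cut of `G`. -/
theorem stmt17 {V : Type*} (G : SimpleGraph V) (M : Finset (Set V))
    (hM : ∀ X ∈ M, (edgeCut G X).Finite) :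
    (∀ X ∈ M, Saturated M X) ∧
    (∀ X' : Set V, Saturated M X' → (edgeCut G X').Finite) := by
  constructor
  · intro X hX v w h
    exact h X hX
  · intro X' hsat
    have hsub : edgeCut G X' ⊆ ⋃ X ∈ M, edgeCut G X := by
      rintro e ⟨x, y, hadj, hx, hy, rfl⟩
      by_contra hcon
      simp only [Set.mem_iUnion, not_exists] at hcon
      have hagree : ∀ X ∈ M, (x ∈ X ↔ y ∈ X) := by
        intro X hXM
        by_contra hne
        rcases Classical.em (x ∈ X) with hxX | hxX
        · have hyX : y ∉ X := fun hyX => hne ⟨fun _ => hyX, fun _ => hxX⟩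
          exact hcon X hXM ⟨x, y, hadj, hxX, hyX, rfl⟩
        · have hyX : y ∈ X := by
            by_contra hyX
            exact hne ⟨fun h => absurd h hxX, fun h => absurd h hyX⟩
          exact hcon X hXM ⟨y, x, hadj.symm, hyX, hxX, Sym2.eq_swap⟩
      exact hy ((hsat x y hagree).mp hx)
    exact Set.Finite.subset (Set.Finite.biUnion M.finite_toSet hM) hsub
end
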